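/- arXiv:1105.5060 — 11 statements merged into one kernel-verified Lean document; each statement's English description precedes it below -/
import Mathlib

section
/- Let k > 0 and l > 0. Let h : ℝ × ℝ → ℝ be positive and twice continuously differentiable in the second variable s, with h(t,0) = 1, ∂_s h(t,0) = 0 and ∂²_s h(t,s) ≥ k² · h(t,s) for all (t,s) (so h is the Fermi-coordinate metric coefficient of a cylinder of curvature at most −k² whose baseline, of length l, lies at s = 0). Let A ⊆ [0,l] × ℝ be a measurable set of finite area Ar = ∬_A h(t,s) ds dt. Let f : ℝ × ℝ → ℝ be Lipschitz such that for every t ∈ [0,l] there exist real numbers α < β with {t} × (α,β) ⊆ A, f(t,α) = 0 and f(t,β) = 1 (encoding the boundary values 0 and 1 on the two boundary components of a non-contractible annulus). Then ∬_A ( (∂_t f)²/h + h·(∂_s f)² ) ds dt ≥ k·l / (h₁(W') − h₁(−W')), where W' = arcsinh(k·Ar/(2l)) and h₁(x) = 2·arctan(exp(x)); equivalently, the right-hand side equals k·l / (2·arctan(k·Ar/(2l))). -/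
open Real MeasureTheory Set
open scoped NNReal

/-- `h₁ x = 2 · arctan (exp x)`, an antiderivative of `1 / cosh`. -/
noncomputable def h₁ (x : ℝ) : ℝ := 2 * Real.arctan (Real.exp x)

/-!
Comparing with the solution of `u'' = k² u`, `u 0 = 1`, `u' 0 = 0` gives `h (t, s) ≥ cosh (k s)`.
On the slice `E_t` of `A` over `t`, `f (t, ·)` climbs from `0` to `1`, so
`1 ≤ ∫_{E_t} |∂_s f| ≤ (∫_{E_t} h (∂_s f)²)^{1/2} (∫_{E_t} 1/h)^{1/2}`. A bathtub argument shows
that among slices of `h`-area `a`, `∫ 1/h` is largest for `h = cosh (k ·)` on a symmetric interval,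
where it equals `sechMass k a = 2 arctan (k a / 2) / k =: G a`; so the slice carries energy at
least `1 / G (a t)`.
As `G` is concave and increasing, `1 / G` is convex, and Jensen's inequality in `t ∈ [0, l]`,
with `∫ a t dt = Ar`, bounds the energy below by `l / G (Ar / l)`, which is the stated bound
because `h₁ W - h₁ (-W) = 2 arctan (sinh W)`.
-/

lemma isMinOn_univ_of_deriv_sign {R : ℝ → ℝ} (hR : Differentiable ℝ R)
    (hpos : ∀ x, 0 < x → 0 ≤ deriv R x) (hneg : ∀ x, x < 0 → deriv R x ≤ 0) :
    IsMinOn R univ 0 := by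
  intro s _
  rcases le_total 0 s with hs | hs
  · refine monotoneOn_of_deriv_nonneg (convex_Ici 0) hR.continuous.continuousOn
      hR.differentiableOn (fun x hx => hpos x ?_) self_mem_Ici hs hs
    rwa [interior_Ici] at hx
  · refine antitoneOn_of_deriv_nonpos (convex_Iic 0) hR.continuous.continuousOn
      hR.differentiableOn (fun x hx => hneg x ?_) hs self_mem_Iic hs
    rwa [interior_Iic] at hx

lemma hasDerivAt_cosh_mul (k s : ℝ) :
    HasDerivAt (fun s => cosh (k * s)) (k * sinh (k * s)) s :=
  ((hasDerivAt_id' s).const_mul k).cosh.congr_deriv (by ring)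

lemma hasDerivAt_sinh_mul (k s : ℝ) :
    HasDerivAt (fun s => sinh (k * s)) (k * cosh (k * s)) s :=
  ((hasDerivAt_id' s).const_mul k).sinh.congr_deriv (by ring)

lemma continuous_cosh_mul (k : ℝ) : Continuous fun s => cosh (k * s) := by fun_prop

theorem cosh_mul_le_of_le_deriv_deriv {k : ℝ} {u : ℝ → ℝ} (hu : ContDiff ℝ 2 u) (h0 : u 0 = 1)
    (h0' : deriv u 0 = 0) (hineq : ∀ s, k ^ 2 * u s ≤ deriv (deriv u) s) (s : ℝ) :
    cosh (k * s) ≤ u s := by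
  have hu' : Differentiable ℝ u := hu.differentiable (by norm_num)
  have hu'' : Differentiable ℝ (deriv u) :=
    (contDiff_succ_iff_deriv (n := 1).mp hu).2.2.differentiable (by norm_num)
  -- The Wronskian of `u` and `cosh (k ·)`; it grows because `u'' - k² u ≥ 0`.
  set F : ℝ → ℝ := fun s => deriv u s * cosh (k * s) - u s * (k * sinh (k * s))
  have hF s : HasDerivAt F ((deriv (deriv u) s - k ^ 2 * u s) * cosh (k * s)) s :=
    (((hu'' s).hasDerivAt.mul (hasDerivAt_cosh_mul k s)).sub
      ((hu' s).hasDerivAt.mul ((hasDerivAt_sinh_mul k s).const_mul k))).congr_deriv (by ring)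
  have hFmono : Monotone F := monotone_of_deriv_nonneg (fun s => (hF s).differentiableAt)
    fun s => (hF s).deriv ▸ mul_nonneg (sub_nonneg.2 (hineq s)) (cosh_pos _).le
  have hF0 : F 0 = 0 := by simp [F, h0, h0']
  have hR s : HasDerivAt (fun s => u s / cosh (k * s)) (F s / cosh (k * s) ^ 2) s :=
    (hu' s).hasDerivAt.div (hasDerivAt_cosh_mul k s) (cosh_pos _).ne'
  have hmin := isMinOn_univ_of_deriv_sign (fun s => (hR s).differentiableAt)
    (fun x hx => (hR x).deriv ▸ div_nonneg (hF0 ▸ hFmono hx.le) (sq_nonneg _))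
    (fun x hx => (hR x).deriv ▸ div_nonpos_of_nonpos_of_nonneg (hF0 ▸ hFmono hx.le) (sq_nonneg _))
    (mem_univ s)
  simpa [h0, le_div_iff₀ (cosh_pos _)] using hmin

/-- `∫_{-w}^{w} ds / cosh (k s)` for the `w ≥ 0` with `∫_{-w}^{w} cosh (k s) ds = a`, that is
`sinh (k w) = k a / 2`. -/
noncomputable def sechMass (k a : ℝ) : ℝ := 2 * arctan (k * a / 2) / k

section SechMass

variable {k : ℝ}

lemma h₁_sub_h₁_neg (W : ℝ) : h₁ W - h₁ (-W) = 2 * arctan (sinh W) := by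
  have hprod : exp W * -exp (-W) < 1 := by
    rw [mul_neg, ← exp_add, add_neg_cancel, exp_zero]; norm_num
  rw [h₁, h₁, ← mul_sub, sub_eq_add_neg, ← arctan_neg, arctan_add hprod, mul_neg, ← exp_add,
    add_neg_cancel, exp_zero, sinh_eq]
  norm_num
  ring_nf

lemma h₁_sub_h₁_neg_arsinh (hk : k ≠ 0) (a : ℝ) :
    h₁ (arsinh (k * a / 2)) - h₁ (-arsinh (k * a / 2)) = k * sechMass k a := by
  rw [h₁_sub_h₁_neg, sinh_arsinh, sechMass]
  field_simp

lemma hasDerivAt_sechMass (hk : k ≠ 0) (a : ℝ) :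
    HasDerivAt (sechMass k) (1 / (1 + (k * a / 2) ^ 2)) a := by
  have := (((hasDerivAt_id' a).const_mul k).div_const 2).arctan.const_mul 2 |>.div_const k
  exact this.congr_deriv (by field_simp)

lemma sechMass_pos (hk : 0 < k) {a : ℝ} (ha : 0 < a) : 0 < sechMass k a := by
  have : 0 < arctan (k * a / 2) := arctan_pos.2 (by positivity)
  unfold sechMass; positivity

lemma sechMass_nonpos (hk : 0 < k) {a : ℝ} (ha : a ≤ 0) : sechMass k a ≤ 0 := by
  have : arctan (k * a / 2) ≤ 0 := by
    rw [← arctan_zero]; exact arctan_strictMono.monotone (by nlinarith)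
  unfold sechMass
  exact div_nonpos_of_nonpos_of_nonneg (by linarith) hk.le

lemma concaveOn_sechMass (hk : 0 < k) : ConcaveOn ℝ (Ici 0) (sechMass k) := by
  have hd a := hasDerivAt_sechMass hk.ne' a
  refine AntitoneOn.concaveOn_of_deriv (convex_Ici 0)
    (fun a _ => (hd a).continuousAt.continuousWithinAt)
    (fun a _ => (hd a).differentiableAt.differentiableWithinAt) ?_
  intro x hx y _ hxy
  rw [interior_Ici] at hx
  rw [(hd x).deriv, (hd y).deriv]
  have : 0 ≤ k * x / 2 := by have := hx.out; positivity
  gcongr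

lemma ConcaveOn.le_add_mul_sub_of_hasDerivAt {S : Set ℝ} {f : ℝ → ℝ} {f' x y : ℝ}
    (hf : ConcaveOn ℝ S f) (hx : x ∈ S) (hy : y ∈ S) (hd : HasDerivAt f f' x) :
    f y ≤ f x + f' * (y - x) := by
  rcases lt_trichotomy x y with hxy | rfl | hyx
  · have := hf.slope_le_of_hasDerivAt hx hy hxy hd
    rw [slope_def_field, div_le_iff₀ (sub_pos.2 hxy)] at this
    linarith
  · simp
  · have := hf.le_slope_of_hasDerivAt hy hx hyx hd
    rw [slope_def_field, le_div_iff₀ (sub_pos.2 hyx)] at this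
    linarith

lemma one_div_sub_div_sq_le_one_div {x x₀ : ℝ} (hx : 0 < x) (hx₀ : 0 < x₀) :
    1 / x₀ - (x - x₀) / x₀ ^ 2 ≤ 1 / x := by
  have : 1 / x₀ - (x - x₀) / x₀ ^ 2 = (2 * x₀ - x) / x₀ ^ 2 := by field_simp; ring
  rw [this, div_le_div_iff₀ (by positivity) hx]
  nlinarith [sq_nonneg (x - x₀)]

lemma inv_sechMass_tangent_le (hk : 0 < k) {a m : ℝ} (ha : 0 < a) (hm : 0 < m) :
    1 / sechMass k m - 1 / (1 + (k * m / 2) ^ 2) / sechMass k m ^ 2 * (a - m) ≤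
      1 / sechMass k a := by
  have htan := (concaveOn_sechMass hk).le_add_mul_sub_of_hasDerivAt (mem_Ici.2 hm.le)
    (mem_Ici.2 ha.le) (hasDerivAt_sechMass hk.ne' m)
  calc _ ≤ 1 / sechMass k m - (sechMass k a - sechMass k m) / sechMass k m ^ 2 := by
        rw [div_mul_eq_mul_div]
        gcongr
        linarith
    _ ≤ _ := one_div_sub_div_sq_le_one_div (sechMass_pos hk ha) (sechMass_pos hk hm)

lemma integral_cosh_mul (hk : k ≠ 0) (w : ℝ) :
    ∫ s in -w..w, cosh (k * s) = 2 * sinh (k * w) / k := by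
  rw [intervalIntegral.integral_eq_sub_of_hasDerivAt
    (fun s _ => (hasDerivAt_sinh_mul k s).div_const k |>.congr_deriv (by field_simp))
    ((continuous_cosh_mul k).intervalIntegrable _ _)]
  rw [mul_neg, sinh_neg]
  ring

lemma integral_inv_cosh_mul (hk : k ≠ 0) (w : ℝ) :
    ∫ s in -w..w, (cosh (k * s))⁻¹ = 2 * arctan (sinh (k * w)) / k := by
  have hd s : HasDerivAt (fun s => arctan (sinh (k * s)) / k) (cosh (k * s))⁻¹ s :=
    ((hasDerivAt_sinh_mul k s).arctan.div_const k).congr_deriv (by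
      rw [← cosh_sq']
      field_simp [(cosh_pos (k * s)).ne'])
  rw [intervalIntegral.integral_eq_sub_of_hasDerivAt (fun s _ => hd s)
    (((continuous_cosh_mul k).inv₀ fun s => (cosh_pos _).ne').intervalIntegrable _ _)]
  rw [mul_neg, sinh_neg, arctan_neg]
  ring

lemma cosh_mul_le_cosh_mul_iff (hk : 0 < k) {s w : ℝ} (hw : 0 ≤ w) :
    cosh (k * s) ≤ cosh (k * w) ↔ s ∈ Icc (-w) w := by
  rw [cosh_le_cosh, abs_mul, abs_mul, abs_of_pos hk, abs_of_nonneg hw,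
    mul_le_mul_iff_of_pos_left hk, abs_le, mem_Icc]

lemma inv_sub_div_sq_nonneg_iff {y c : ℝ} (hy : 0 < y) (hc : 0 < c) :
    0 ≤ y⁻¹ - y / c ^ 2 ↔ y ≤ c := by
  have : y⁻¹ - y / c ^ 2 = (c ^ 2 - y ^ 2) / (y * c ^ 2) := by field_simp
  rw [this, le_div_iff₀ (by positivity), zero_mul, sub_nonneg,
    pow_le_pow_iff_left₀ hy.le hc.le two_ne_zero]

-- With `c = cosh (k w)` and `∫_{-w}^{w} cosh (k s) ds = a`, the decreasing function
-- `x ↦ 1/x - x/c²` bounds `1/v - v/c²` by the positive part of `1/cosh (k s) - cosh (k s)/c²`,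
-- which is supported on `[-w, w]`.
theorem setIntegral_inv_le_sechMass (hk : 0 < k) {v : ℝ → ℝ} (hv : ∀ s, cosh (k * s) ≤ v s)
    {E : Set ℝ} (hvi : IntegrableOn v E) {a : ℝ} (hva : ∫ s in E, v s ≤ a) :
    ∫ s in E, (v s)⁻¹ ≤ sechMass k a := by
  have hvpos s : 0 < v s := (cosh_pos _).trans_le (hv s)
  have ha : 0 ≤ a := (integral_nonneg fun s => (hvpos s).le).trans hva
  set w := arsinh (k * a / 2) / k
  have hw : 0 ≤ w := div_nonneg (arsinh_nonneg_iff.2 (by positivity)) hk.le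
  have hkw : sinh (k * w) = k * a / 2 := by
    rw [mul_div_cancel₀ _ hk.ne', sinh_arsinh]
  set c := cosh (k * w)
  have hc : 0 < c := cosh_pos _
  set q : ℝ → ℝ := fun s => (cosh (k * s))⁻¹ - cosh (k * s) / c ^ 2
  have hq_nonneg : ∀ s, 0 ≤ (Icc (-w) w).indicator q s :=
    indicator_nonneg fun s hs =>
      (inv_sub_div_sq_nonneg_iff (cosh_pos _) hc).2 ((cosh_mul_le_cosh_mul_iff hk hw).2 hs)
  have hpt s : (v s)⁻¹ ≤ v s / c ^ 2 + (Icc (-w) w).indicator q s := by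
    have hmono : (v s)⁻¹ - v s / c ^ 2 ≤ q s := by
      have := inv_anti₀ (cosh_pos _) (hv s)
      have : cosh (k * s) / c ^ 2 ≤ v s / c ^ 2 := by gcongr; exact hv s
      linarith
    by_cases hs : s ∈ Icc (-w) w
    · rw [indicator_of_mem hs]; linarith
    · rw [indicator_of_notMem hs]
      have : q s ≤ 0 := by
        refine le_of_not_gt fun hpos => hs ((cosh_mul_le_cosh_mul_iff hk hw).1 ?_)
        exact (inv_sub_div_sq_nonneg_iff (cosh_pos _) hc).1 hpos.le
      linarith
  have hqi : Integrable ((Icc (-w) w).indicator q) :=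
    (((continuous_cosh_mul k).inv₀ fun s => (cosh_pos _).ne').sub
      ((continuous_cosh_mul k).div_const _)).integrableOn_Icc.integrable_indicator measurableSet_Icc
  have hq_integral : ∫ s, (Icc (-w) w).indicator q s = sechMass k a - a / c ^ 2 := by
    rw [integral_indicator measurableSet_Icc, integral_Icc_eq_integral_Ioc,
      ← intervalIntegral.integral_of_le (by linarith), intervalIntegral.integral_sub,
      intervalIntegral.integral_div, integral_inv_cosh_mul hk.ne', integral_cosh_mul hk.ne', hkw,
      sechMass]
    · field_simp
    · exact ((continuous_cosh_mul k).inv₀ fun s => (cosh_pos _).ne').intervalIntegrable _ _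
    · exact ((continuous_cosh_mul k).div_const _).intervalIntegrable _ _
  calc ∫ s in E, (v s)⁻¹ ≤ ∫ s in E, (v s / c ^ 2 + (Icc (-w) w).indicator q s) :=
        integral_mono_of_nonneg (.of_forall fun s => (inv_pos.2 (hvpos s)).le)
          ((hvi.div_const _).add hqi.integrableOn) (.of_forall hpt)
    _ = (∫ s in E, v s) / c ^ 2 + ∫ s in E, (Icc (-w) w).indicator q s := by
        rw [integral_add (hvi.div_const _) hqi.integrableOn, integral_div]
    _ ≤ a / c ^ 2 + ∫ s, (Icc (-w) w).indicator q s :=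
        add_le_add (by gcongr) (setIntegral_le_integral hqi (.of_forall hq_nonneg))
    _ = sechMass k a := by rw [hq_integral]; ring

end SechMass

section Slice

variable {C : ℝ≥0} {g : ℝ → ℝ}

lemma LipschitzWith.abs_deriv_le (hg : LipschitzWith C g) (x : ℝ) : |deriv g x| ≤ C :=
  norm_deriv_le_of_lipschitz hg

lemma LipschitzWith.deriv_sq_le (hg : LipschitzWith C g) (x : ℝ) : deriv g x ^ 2 ≤ (C : ℝ) ^ 2 :=
  sq_le_sq' (abs_le.1 (hg.abs_deriv_le x)).1 (abs_le.1 (hg.abs_deriv_le x)).2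

lemma LipschitzWith.integrableOn_abs_deriv (hg : LipschitzWith C g) {E : Set ℝ}
    (hE : volume E ≠ ⊤) : IntegrableOn (fun s => |deriv g s|) E :=
  (integrableOn_const hE).mono' (measurable_deriv g).abs.aestronglyMeasurable
    (.of_forall fun s => (abs_abs (deriv g s)).symm ▸ hg.abs_deriv_le s)

lemma LipschitzWith.sub_le_setIntegral_abs_deriv (hg : LipschitzWith C g) {α β : ℝ} (hab : α ≤ β)
    {E : Set ℝ} (hE : volume E ≠ ⊤) (hsub : Ioo α β ⊆ E) :
    g β - g α ≤ ∫ s in E, |deriv g s| := by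
  have hac := (hg.lipschitzOnWith (s := uIcc α β)).absolutelyContinuousOnInterval
  calc g β - g α = ∫ s in α..β, deriv g s := hac.integral_deriv_eq_sub.symm
    _ ≤ ∫ s in α..β, |deriv g s| :=
        intervalIntegral.integral_mono_on hab hac.intervalIntegrable_deriv
          hac.intervalIntegrable_deriv.abs fun s _ => le_abs_self _
    _ = ∫ s in Ioo α β, |deriv g s| := by
        rw [intervalIntegral.integral_of_le hab, integral_Ioc_eq_integral_Ioo]
    _ ≤ ∫ s in E, |deriv g s| :=
        setIntegral_mono_set (hg.integrableOn_abs_deriv hE) (.of_forall fun s => abs_nonneg _)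
          hsub.eventuallyLE

lemma sub_le_setIntegral_of_one_le {v : ℝ → ℝ} (hv : ∀ s, 1 ≤ v s) {E : Set ℝ}
    (hvi : IntegrableOn v E) {α β : ℝ} (hab : α ≤ β) (hsub : Ioo α β ⊆ E) :
    β - α ≤ ∫ s in E, v s := by
  calc β - α = ∫ _ in Ioo α β, (1 : ℝ) := by
        rw [setIntegral_const, Real.volume_real_Ioo_of_le hab, smul_eq_mul, mul_one]
    _ ≤ ∫ s in Ioo α β, v s :=
        integral_mono_of_nonneg (.of_forall fun _ => zero_le_one) (hvi.mono_set hsub)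
          (.of_forall hv)
    _ ≤ ∫ s in E, v s :=
        setIntegral_mono_set hvi (.of_forall fun s => zero_le_one.trans (hv s)) hsub.eventuallyLE

lemma two_mul_abs_le_mul_sq_add_inv {y : ℝ} (hy : 0 < y) (x : ℝ) :
    2 * |x| ≤ y * x ^ 2 + y⁻¹ := by
  rw [← sq_abs x, ← mul_le_mul_iff_of_pos_left hy]
  have : y * y⁻¹ = 1 := mul_inv_cancel₀ hy.ne'
  nlinarith [sq_nonneg (y * |x| - 1)]

theorem inv_sechMass_le_setIntegral_mul_deriv_sq {k : ℝ} (hk : 0 < k) {v : ℝ → ℝ}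
    (hvm : Measurable v) (hv : ∀ s, cosh (k * s) ≤ v s) (hg : LipschitzWith C g) {E : Set ℝ}
    (hvi : IntegrableOn v E) {α β : ℝ} (hab : α < β) (hsub : Ioo α β ⊆ E) (hgα : g α = 0)
    (hgβ : g β = 1) :
    1 / sechMass k (∫ s in E, v s) ≤ ∫ s in E, v s * deriv g s ^ 2 := by
  have hv1 s : 1 ≤ v s := (one_le_cosh _).trans (hv s)
  have hvpos s : 0 < v s := zero_lt_one.trans_le (hv1 s)
  have hE : volume E ≠ ⊤ := by
    simpa [abs_of_pos (hvpos _), hv1] using (hvi.measure_norm_ge_lt_top one_pos).ne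
  have hinv : ∫ s in E, (v s)⁻¹ ≤ sechMass k (∫ s in E, v s) :=
    setIntegral_inv_le_sechMass hk hv hvi le_rfl
  have hlam : 0 < sechMass k (∫ s in E, v s) :=
    sechMass_pos hk ((sub_pos.2 hab).trans_le (sub_le_setIntegral_of_one_le hv1 hvi hab.le hsub))
  generalize sechMass k (∫ s in E, v s) = lam at hinv hlam ⊢
  have hftc : 1 ≤ ∫ s in E, |deriv g s| := by
    simpa [hgα, hgβ] using hg.sub_le_setIntegral_abs_deriv hab.le hE hsub
  have hX : IntegrableOn (fun s => v s * deriv g s ^ 2) E :=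
    (hvi.const_mul ((C : ℝ) ^ 2)).mono'
      (hvm.mul ((measurable_deriv g).pow_const 2)).aestronglyMeasurable
      (.of_forall fun s => by
        rw [Real.norm_eq_abs, abs_of_nonneg (mul_nonneg (hvpos s).le (sq_nonneg _)), mul_comm]
        exact mul_le_mul_of_nonneg_right (hg.deriv_sq_le s) (hvpos s).le)
  have hY : IntegrableOn (fun s => (v s)⁻¹) E :=
    (integrableOn_const (C := (1 : ℝ)) hE).mono' hvm.inv.aestronglyMeasurable
      (.of_forall fun s => by
        rw [Real.norm_eq_abs, abs_of_pos (inv_pos.2 (hvpos s))]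
        exact inv_le_one_of_one_le₀ (hv1 s))
  -- Cauchy-Schwarz, in the form of AM-GM with the weight `lam * v`.
  have hamgm : 2 * ∫ s in E, |deriv g s| ≤
      lam * (∫ s in E, v s * deriv g s ^ 2) + lam⁻¹ * ∫ s in E, (v s)⁻¹ := by
    calc 2 * ∫ s in E, |deriv g s| = ∫ s in E, 2 * |deriv g s| := (integral_const_mul _ _).symm
      _ ≤ ∫ s in E, (lam * (v s * deriv g s ^ 2) + lam⁻¹ * (v s)⁻¹) :=
          integral_mono_of_nonneg (.of_forall fun s => by positivity)
            ((hX.const_mul _).add (hY.const_mul _)) (.of_forall fun s => by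
              have := two_mul_abs_le_mul_sq_add_inv (mul_pos hlam (hvpos s)) (deriv g s)
              rw [mul_inv] at this
              linarith)
      _ = _ := by
          rw [integral_add (hX.const_mul _) (hY.const_mul _), integral_const_mul,
            integral_const_mul]
  have : lam⁻¹ * ∫ s in E, (v s)⁻¹ ≤ 1 := by
    rw [inv_mul_le_iff₀ hlam, mul_one]; exact hinv
  rw [div_le_iff₀ hlam]
  nlinarith

end Slice

lemma mul_le_setIntegral_of_affine_le {X : Type*} [MeasurableSpace X] {μ : Measure X} {S : Set X}
    (hS : μ S ≠ ⊤) {a J : X → ℝ} {c d m : ℝ} (ha : IntegrableOn a S μ) (hJ : IntegrableOn J S μ)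
    (hmean : ∫ x in S, a x ∂μ = μ.real S * m)
    (hle : ∀ᵐ x ∂μ.restrict S, c - d * (a x - m) ≤ J x) :
    μ.real S * c ≤ ∫ x in S, J x ∂μ := by
  have hc : IntegrableOn (fun _ => c) S μ := integrableOn_const hS
  have hm : IntegrableOn (fun _ => m) S μ := integrableOn_const hS
  have had : IntegrableOn (fun x => d * (a x - m)) S μ := (ha.sub hm).const_mul d
  calc μ.real S * c = ∫ x in S, (c - d * (a x - m)) ∂μ := by
        rw [integral_sub hc had, integral_const_mul, integral_sub ha hm, hmean, setIntegral_const,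
          setIntegral_const, smul_eq_mul, smul_eq_mul]
        ring
    _ ≤ ∫ x in S, J x ∂μ := integral_mono_ae (hc.sub had) hJ hle

section Fubini

variable {X Y : Type*} [MeasurableSpace X] [MeasurableSpace Y] {μ : Measure X} {ν : Measure Y}
  {A : Set (X × Y)} {F : X × Y → ℝ}

lemma ae_integrableOn_slice [SFinite μ] [SFinite ν] (hA : MeasurableSet A)
    (hF : IntegrableOn F A (μ.prod ν)) :
    ∀ᵐ x ∂μ, IntegrableOn (fun y => F (x, y)) (Prod.mk x ⁻¹' A) ν := by
  filter_upwards [((integrable_indicator_iff hA).2 hF).prod_right_ae] with x hx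
  rw [← integrable_indicator_iff (measurable_prodMk_left hA)]
  exact hx.congr (.of_forall fun y => (indicator_comp_right (Prod.mk x)).symm)

lemma integral_indicator_slice (hA : MeasurableSet A) (x : X) :
    ∫ y, A.indicator F (x, y) ∂ν = ∫ y in Prod.mk x ⁻¹' A, F (x, y) ∂ν := by
  rw [← integral_indicator (measurable_prodMk_left hA)]
  exact integral_congr_ae (.of_forall fun y => (indicator_comp_right (Prod.mk x)).symm)

lemma integrable_setIntegral_slice [SFinite ν] (hA : MeasurableSet A)
    (hF : IntegrableOn F A (μ.prod ν)) :
    Integrable (fun x => ∫ y in Prod.mk x ⁻¹' A, F (x, y) ∂ν) μ := by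
  simpa only [integral_indicator_slice hA] using
    ((integrable_indicator_iff hA).2 hF).integral_prod_left

lemma setIntegral_prod_eq_setIntegral_slice [SFinite μ] [SFinite ν] {S : Set X}
    (hA : MeasurableSet A) (hAS : A ⊆ S ×ˢ univ) (hF : IntegrableOn F A (μ.prod ν)) :
    ∫ p in A, F p ∂μ.prod ν = ∫ x in S, ∫ y in Prod.mk x ⁻¹' A, F (x, y) ∂ν ∂μ := by
  rw [← integral_indicator hA, integral_prod _ ((integrable_indicator_iff hA).2 hF)]
  simp only [integral_indicator_slice hA]
  refine (setIntegral_eq_integral_of_forall_compl_eq_zero fun x hx => ?_).symm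
  have : Prod.mk x ⁻¹' A = ∅ := eq_empty_of_forall_notMem fun y hy => hx (hAS hy).1
  rw [this, Measure.restrict_empty, integral_zero_measure]

end Fubini

noncomputable def dirichletDensity (h f : ℝ × ℝ → ℝ) (p : ℝ × ℝ) : ℝ :=
  deriv (fun t => f (t, p.2)) p.1 ^ 2 / h p + h p * deriv (fun s => f (p.1, s)) p.2 ^ 2

section Density

variable {f h : ℝ × ℝ → ℝ} {C : ℝ≥0}

lemma LipschitzWith.comp_prodMk_left (hf : LipschitzWith C f) (t : ℝ) :
    LipschitzWith C fun s => f (t, s) := by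
  simpa [Function.comp_def] using hf.comp (LipschitzWith.prodMk_left t)

lemma LipschitzWith.comp_prodMk_right (hf : LipschitzWith C f) (s : ℝ) :
    LipschitzWith C fun t => f (t, s) := by
  simpa [Function.comp_def] using hf.comp (LipschitzWith.prodMk_right s)

lemma Continuous.measurable_deriv_snd (hf : Continuous f) :
    Measurable fun p : ℝ × ℝ => deriv (fun s => f (p.1, s)) p.2 :=
  measurable_deriv_with_param (f := fun t s => f (t, s)) hf

lemma Continuous.measurable_deriv_fst (hf : Continuous f) :
    Measurable fun p : ℝ × ℝ => deriv (fun t => f (t, p.2)) p.1 :=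
  (measurable_deriv_with_param (f := fun s t => f (t, s)) (hf.comp continuous_swap)).comp
    measurable_swap

lemma dirichletDensity_nonneg (hh : ∀ p, 0 ≤ h p) (p : ℝ × ℝ) : 0 ≤ dirichletDensity h f p :=
  add_nonneg (div_nonneg (sq_nonneg _) (hh p)) (mul_nonneg (hh p) (sq_nonneg _))

lemma mul_deriv_sq_le_dirichletDensity {p : ℝ × ℝ} (hp : 0 ≤ h p) :
    h p * deriv (fun s => f (p.1, s)) p.2 ^ 2 ≤ dirichletDensity h f p :=
  le_add_of_nonneg_left (div_nonneg (sq_nonneg _) hp)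

lemma integrableOn_dirichletDensity (hf : LipschitzWith C f) (hh : ∀ p, 1 ≤ h p)
    {A : Set (ℝ × ℝ)} (hhA : IntegrableOn h A) : IntegrableOn (dirichletDensity h f) A := by
  have hm := hhA.aemeasurable
  refine (hhA.const_mul (2 * (C : ℝ) ^ 2)).mono' (AEMeasurable.aestronglyMeasurable ?_)
    (.of_forall fun p => ?_)
  · exact ((hf.continuous.measurable_deriv_fst.aemeasurable.pow_const 2).div hm).add
      (hm.mul (hf.continuous.measurable_deriv_snd.aemeasurable.pow_const 2))
  · have h1 := (hf.comp_prodMk_right p.2).deriv_sq_le p.1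
    have h2 := (hf.comp_prodMk_left p.1).deriv_sq_le p.2
    have hp := hh p
    rw [Real.norm_eq_abs,
      abs_of_nonneg (dirichletDensity_nonneg (fun q => zero_le_one.trans (hh q)) p),
      dirichletDensity]
    have : deriv (fun t => f (t, p.2)) p.1 ^ 2 / h p ≤ (C : ℝ) ^ 2 := by
      rw [div_le_iff₀ (by linarith)]; nlinarith
    nlinarith

theorem inv_sechMass_le_setIntegral_slice_dirichletDensity {k : ℝ} (hk : 0 < k)
    (hf : LipschitzWith C f) {t : ℝ} (hht : Continuous fun s => h (t, s))
    (hcosh : ∀ s, cosh (k * s) ≤ h (t, s)) {A : Set (ℝ × ℝ)}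
    (hhA : IntegrableOn (fun s => h (t, s)) (Prod.mk t ⁻¹' A))
    (hdA : IntegrableOn (fun s => dirichletDensity h f (t, s)) (Prod.mk t ⁻¹' A)) {α β : ℝ}
    (hab : α < β) (hsub : {t} ×ˢ Ioo α β ⊆ A) (hfα : f (t, α) = 0) (hfβ : f (t, β) = 1) :
    1 / sechMass k (∫ s in Prod.mk t ⁻¹' A, h (t, s)) ≤
      ∫ s in Prod.mk t ⁻¹' A, dirichletDensity h f (t, s) := by
  have hnn s : 0 ≤ h (t, s) := (cosh_pos _).le.trans (hcosh s)
  calc _ ≤ ∫ s in Prod.mk t ⁻¹' A, h (t, s) * deriv (fun s => f (t, s)) s ^ 2 :=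
        inv_sechMass_le_setIntegral_mul_deriv_sq hk hht.measurable hcosh (hf.comp_prodMk_left t)
          hhA hab (fun s hs => hsub ⟨rfl, hs⟩) hfα hfβ
    _ ≤ _ := integral_mono_of_nonneg (.of_forall fun s => mul_nonneg (hnn s) (sq_nonneg _)) hdA
        (.of_forall fun s => mul_deriv_sq_le_dirichletDensity (p := (t, s)) (hnn s))

end Density

theorem capacity_lower_bound_variable_negative_curvature_general
    (k l : ℝ) (hk : 0 < k) (hl : 0 < l)
    (h : ℝ × ℝ → ℝ)
    (hsmooth : ∀ t : ℝ, ContDiff ℝ 2 (fun s => h (t, s)))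
    (hbase : ∀ t : ℝ, h (t, 0) = 1)
    (hbase' : ∀ t : ℝ, deriv (fun s => h (t, s)) 0 = 0)
    (hcurv : ∀ t s : ℝ, k ^ 2 * h (t, s) ≤ deriv (deriv (fun s => h (t, s))) s)
    (A : Set (ℝ × ℝ)) (hA : MeasurableSet A) (hAsub : A ⊆ Icc 0 l ×ˢ univ)
    (hAint : IntegrableOn (fun p => h p) A volume)
    (Ar : ℝ) (hAr : Ar = ∫ p in A, h p)
    (f : ℝ × ℝ → ℝ) (C : ℝ≥0) (hf : LipschitzWith C f)
    (hbdry : ∀ t ∈ Icc (0 : ℝ) l, ∃ α β : ℝ, α < β ∧ ({t} ×ˢ Ioo α β) ⊆ A ∧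
      f (t, α) = 0 ∧ f (t, β) = 1)
    (W' : ℝ) (hW' : W' = Real.arsinh (k * Ar / (2 * l))) :
    k * l / (h₁ W' - h₁ (-W')) ≤
      ∫ p in A, ((deriv (fun t => f (t, p.2)) p.1) ^ 2 / h p
        + h p * (deriv (fun s => f (p.1, s)) p.2) ^ 2) := by
  have hcosh t s : cosh (k * s) ≤ h (t, s) :=
    cosh_mul_le_of_le_deriv_deriv (hsmooth t) (hbase t) (hbase' t) (hcurv t) s
  have hone p : 1 ≤ h p := (one_le_cosh _).trans (hcosh p.1 p.2)
  have hdens := integrableOn_dirichletDensity hf hone hAint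
  change _ ≤ ∫ p in A, dirichletDensity h f p
  obtain ⟨m, rfl⟩ : ∃ m, Ar = l * m := ⟨Ar / l, by field_simp⟩
  have hlhs : k * l / (h₁ W' - h₁ (-W')) = volume.real (Icc 0 l) * (1 / sechMass k m) := by
    rw [hW', show k * (l * m) / (2 * l) = k * m / 2 by field_simp,
      h₁_sub_h₁_neg_arsinh hk.ne', Real.volume_real_Icc_of_le hl.le, sub_zero]
    field_simp
  rw [hlhs]
  rcases le_or_gt m 0 with hm | hm
  · exact (mul_nonpos_of_nonneg_of_nonpos measureReal_nonneg
      (one_div_nonpos.2 (sechMass_nonpos hk hm))).trans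
      (setIntegral_nonneg hA fun p _ =>
        dirichletDensity_nonneg (fun q => zero_le_one.trans (hone q)) p)
  rw [Measure.volume_eq_prod, setIntegral_prod_eq_setIntegral_slice hA hAsub hdens]
  -- Jensen for the convex `1 / sechMass k`, through its tangent line at the mean slice mass `m`.
  refine mul_le_setIntegral_of_affine_le (a := fun t => ∫ s in Prod.mk t ⁻¹' A, h (t, s))
    (m := m) (d := 1 / (1 + (k * m / 2) ^ 2) / sechMass k m ^ 2) measure_Icc_lt_top.ne
    (integrable_setIntegral_slice hA hAint).integrableOn
    (integrable_setIntegral_slice hA hdens).integrableOn ?_ ?_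
  · rw [← setIntegral_prod_eq_setIntegral_slice hA hAsub hAint, ← Measure.volume_eq_prod, ← hAr,
      Real.volume_real_Icc_of_le hl.le, sub_zero]
  filter_upwards [ae_restrict_mem measurableSet_Icc,
    ae_restrict_of_ae (ae_integrableOn_slice hA hAint),
    ae_restrict_of_ae (ae_integrableOn_slice hA hdens)] with t ht hht hdt
  obtain ⟨α, β, hab, hsub, hfα, hfβ⟩ := hbdry t ht
  have hmass := sub_le_setIntegral_of_one_le (fun s => hone (t, s)) hht hab.le
    fun s hs => hsub ⟨rfl, hs⟩
  exact (inv_sechMass_tangent_le hk ((sub_pos.2 hab).trans_le hmass) hm).trans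
    (inv_sechMass_le_setIntegral_slice_dirichletDensity hk hf (hsmooth t).continuous (hcosh t)
      hht hdt hab hsub hfα hfβ)

/-- capacity lower bound for a non-contractible annulus of area `Ar`
on a cylinder of variable curvature at most `-k²`, with baseline of length `l`:
the Dirichlet energy of any admissible Lipschitz function is at least
`k·l / (h₁ W' - h₁ (-W'))` with `W' = arsinh (k·Ar / (2l))`. -/
theorem capacity_lower_bound_variable_negative_curvature
    (k l : ℝ) (hk : 0 < k) (hl : 0 < l)
    (h : ℝ × ℝ → ℝ)
    (hpos : ∀ p : ℝ × ℝ, 0 < h p)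
    (hsmooth : ∀ t : ℝ, ContDiff ℝ 2 (fun s => h (t, s)))
    (hbase : ∀ t : ℝ, h (t, 0) = 1)
    (hbase' : ∀ t : ℝ, deriv (fun s => h (t, s)) 0 = 0)
    (hcurv : ∀ t s : ℝ, k ^ 2 * h (t, s) ≤ deriv (deriv (fun s => h (t, s))) s)
    (A : Set (ℝ × ℝ)) (hA : MeasurableSet A) (hAsub : A ⊆ Icc 0 l ×ˢ univ)
    (hAint : IntegrableOn (fun p => h p) A volume)
    (Ar : ℝ) (hAr : Ar = ∫ p in A, h p)
    (f : ℝ × ℝ → ℝ) (C : ℝ≥0) (hf : LipschitzWith C f)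
    (hbdry : ∀ t ∈ Icc (0 : ℝ) l, ∃ α β : ℝ, α < β ∧ ({t} ×ˢ Ioo α β) ⊆ A ∧
      f (t, α) = 0 ∧ f (t, β) = 1)
    (W' : ℝ) (hW' : W' = Real.arsinh (k * Ar / (2 * l))) :
    k * l / (h₁ W' - h₁ (-W')) ≤
      ∫ p in A, ((deriv (fun t => f (t, p.2)) p.1) ^ 2 / h p
        + h p * (deriv (fun s => f (p.1, s)) p.2) ^ 2) :=
  capacity_lower_bound_variable_negative_curvature_general k l hk hl h hsmooth hbase hbase' hcurv A
    hA hAsub hAint Ar hAr f C hf hbdry W' hW'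
end

section
/- Let k > 0, l > 0, and −π/(2k) < −a ≤ W < π/(2k) with a ≥ 0. Set h₂(x) = log((1+sin x)/cos x) and define p : [0,l] × [−a, W] → ℝ by p(t,s) = (h₂(ks) − h₂(−ka)) / (h₂(kW) − h₂(−ka)). Then p(t,−a) = 0, p(t,W) = 1, the annulus A = [0,l] × [−a, W] with metric coefficient h(s) = cos(ks) has area ∬_A cos(ks) ds dt = (l/k)·(sin(kW) + sin(ka)), and the energy of p equals ∬_A ( (∂_t p)²/cos(ks) + cos(ks)·(∂_s p)² ) ds dt = k·l / (h₂(kW) − h₂(−ka)). Hence on a cylinder of constant curvature k² the annulus of constant width with one boundary equal to the shortest boundary s = −a of the cylinder attains the lower bound of the capacity estimate, so that bound is sharp. -/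
/-!
The test function `p` depends on `s` alone and `h₂` is an antiderivative of `sec`, so
`∂ₛp = k sec (k s) / D` with `D = h₂ (k W) - h₂ (-k a)` and `∂ₜp = 0`. The energy density is
therefore `cos (k s) (∂ₛp)² = (k / D)² sec (k s)`, whose integral over the annulus is
`l (k / D)² · D / k = k l / D`; the area is `l ∫ cos (k s) ds`. Positivity of `D` comes from
the strict monotonicity of `h₂` on `(-π/2, π/2)`.
-/

open Real MeasureTheory Set

/-- `h₂ x = log ((1 + sin x) / cos x)`, an antiderivative of `1 / cos`. -/
noncomputable def h₂ (x : ℝ) : ℝ := Real.log ((1 + Real.sin x) / Real.cos x)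

lemma one_add_sin_ne_zero_of_cos_ne_zero {x : ℝ} (hx : cos x ≠ 0) : 1 + sin x ≠ 0 := by
  intro h
  exact hx (cos_eq_zero_iff_sin_eq.mpr (Or.inr (by linarith)))

lemma hasDerivAt_h₂ {x : ℝ} (hx : cos x ≠ 0) : HasDerivAt h₂ (cos x)⁻¹ x := by
  have hquot : HasDerivAt (fun x => (1 + sin x) / cos x) ((1 + sin x) / cos x ^ 2) x :=
    (((hasDerivAt_sin x).const_add 1).div (hasDerivAt_cos x) hx).congr_deriv <| by
      field_simp
      linear_combination sin_sq_add_cos_sq x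
  have hs := one_add_sin_ne_zero_of_cos_ne_zero hx
  exact (hquot.log (div_ne_zero hs hx)).congr_deriv (by field_simp)

lemma strictMonoOn_h₂ : StrictMonoOn h₂ (Ioo (-(π / 2)) (π / 2)) := by
  refine strictMonoOn_of_deriv_pos (convex_Ioo _ _)
    (fun x hx => (hasDerivAt_h₂ (cos_pos_of_mem_Ioo hx).ne').continuousAt.continuousWithinAt)
    fun x hx => ?_
  rw [interior_Ioo] at hx
  rw [(hasDerivAt_h₂ (cos_pos_of_mem_Ioo hx).ne').deriv]
  exact inv_pos.mpr (cos_pos_of_mem_Ioo hx)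

lemma hasDerivAt_h₂_comp_mul_sub_div {k s : ℝ} (c D : ℝ) (hs : cos (k * s) ≠ 0) :
    HasDerivAt (fun s => (h₂ (k * s) - c) / D) (k * (cos (k * s))⁻¹ / D) s := by
  have hcomp := (hasDerivAt_h₂ hs).comp s ((hasDerivAt_id s).const_mul k)
  simpa [mul_comm] using (hcomp.sub_const c).div_const D

lemma mul_mem_Ioo_of_mem_Icc {k x y s : ℝ} (hk : 0 < k) (hx : -(π / (2 * k)) < x)
    (hy : y < π / (2 * k)) (hs : s ∈ Icc x y) : k * s ∈ Ioo (-(π / 2)) (π / 2) := by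
  have hπ : k * (π / (2 * k)) = π / 2 := by field_simp
  constructor <;> nlinarith [hs.1, hs.2]

lemma integral_inv_cos {a b : ℝ} (hab : a ≤ b) (ha : -(π / 2) < a) (hb : b < π / 2) :
    ∫ x in a..b, (cos x)⁻¹ = h₂ b - h₂ a := by
  have hmem : ∀ x ∈ uIcc a b, x ∈ Ioo (-(π / 2)) (π / 2) := fun x hx => by
    rw [uIcc_of_le hab] at hx
    exact ⟨ha.trans_le hx.1, hx.2.trans_lt hb⟩
  refine intervalIntegral.integral_eq_sub_of_hasDerivAt
    (fun x hx => hasDerivAt_h₂ (cos_pos_of_mem_Ioo (hmem x hx)).ne') ?_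
  exact (continuousOn_cos.inv₀ fun x hx =>
    (cos_pos_of_mem_Ioo (hmem x hx)).ne').intervalIntegrable

lemma setIntegral_Icc_prod_Icc_snd {a b c d : ℝ} (hab : a ≤ b) (hcd : c ≤ d) (f : ℝ → ℝ) :
    ∫ q in Icc a b ×ˢ Icc c d, f q.2 = (b - a) * ∫ y in c..d, f y := by
  rw [Measure.volume_eq_prod, intervalIntegral.integral_of_le hcd,
    ← integral_Icc_eq_integral_Ioc]
  simpa [Real.volume_Icc, hab] using
    setIntegral_prod_mul (μ := volume) (ν := volume) (fun _ => (1 : ℝ)) f (Icc a b) (Icc c d)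

theorem capacity_lower_bound_sharp_positive_curvature_general
    (k l a W : ℝ) (hk : 0 < k) (hl : 0 < l)
    (haW : -a < W) (hW : W < π / (2 * k)) (ha' : -(π / (2 * k)) < -a)
    (p : ℝ × ℝ → ℝ)
    (hp : ∀ t s : ℝ, p (t, s) = (h₂ (k * s) - h₂ (-(k * a))) / (h₂ (k * W) - h₂ (-(k * a))))
    (A : Set (ℝ × ℝ)) (hA : A = Icc 0 l ×ˢ Icc (-a) W) :
    (∀ t : ℝ, p (t, -a) = 0) ∧ (∀ t : ℝ, p (t, W) = 1) ∧
    (∫ q in A, Real.cos (k * q.2)) = (l / k) * (Real.sin (k * W) + Real.sin (k * a)) ∧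
    (∫ q in A, ((deriv (fun t => p (t, q.2)) q.1) ^ 2 / Real.cos (k * q.2)
        + Real.cos (k * q.2) * (deriv (fun s => p (q.1, s)) q.2) ^ 2))
      = k * l / (h₂ (k * W) - h₂ (-(k * a))) := by
  set D := h₂ (k * W) - h₂ (-(k * a))
  have hmem : ∀ s ∈ Icc (-a) W, k * s ∈ Ioo (-(π / 2)) (π / 2) :=
    fun s hs => mul_mem_Ioo_of_mem_Icc hk ha' hW hs
  have hka := hmem (-a) ⟨le_rfl, haW.le⟩
  have hkW := hmem W ⟨haW.le, le_rfl⟩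
  rw [mul_neg] at hka
  have hkaW : -(k * a) < k * W := by nlinarith
  have hD : 0 < D := sub_pos.mpr (strictMonoOn_h₂ hka hkW hkaW)
  have hsec : ∫ s in -a..W, (cos (k * s))⁻¹ = D / k := by
    rw [intervalIntegral.integral_comp_mul_left (fun x => (cos x)⁻¹) hk.ne', mul_neg,
      integral_inv_cos hkaW.le hka.1 hkW.2, smul_eq_mul, inv_mul_eq_div]
  have hdens : EqOn (fun q : ℝ × ℝ => (deriv (fun t => p (t, q.2)) q.1) ^ 2 / cos (k * q.2)
      + cos (k * q.2) * (deriv (fun s => p (q.1, s)) q.2) ^ 2)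
      (fun q => (k / D) ^ 2 * (cos (k * q.2))⁻¹) A := by
    rintro ⟨t, s⟩ hq
    rw [hA] at hq
    have hcos := (cos_pos_of_mem_Ioo (hmem s hq.2)).ne'
    simp only [hp, deriv_const, (hasDerivAt_h₂_comp_mul_sub_div _ D hcos).deriv]
    field_simp
    ring
  refine ⟨fun t => by simp [hp], fun t => by rw [hp]; exact div_self hD.ne', ?_, ?_⟩
  · rw [hA, setIntegral_Icc_prod_Icc_snd hl.le haW.le (fun s => cos (k * s)),
      intervalIntegral.integral_comp_mul_left cos hk.ne', integral_cos, mul_neg, sin_neg,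
      sub_neg_eq_add, smul_eq_mul, sub_zero]
    field_simp
  · rw [setIntegral_congr_fun (hA ▸ measurableSet_Icc.prod measurableSet_Icc) hdens, hA,
      setIntegral_Icc_prod_Icc_snd hl.le haW.le (fun s => (k / D) ^ 2 * (cos (k * s))⁻¹),
      intervalIntegral.integral_const_mul, hsec, sub_zero]
    field_simp

/-- on the cylinder of constant curvature `k²` (Fermi metric
coefficient `cos (k s)`), the annulus `A = [0,l] × [-a,W]` of constant width
anchored at the shortest boundary `s = -a`, together with the test function
`p (t,s) = (h₂ (k s) - h₂ (-k a)) / (h₂ (k W) - h₂ (-k a))`, satisfies: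
`p = 0` on `s = -a`, `p = 1` on `s = W`, `area A = (l/k)·(sin (k W) + sin (k a))`,
and the energy of `p` equals `k·l / (h₂ (k W) - h₂ (-k a))`, so the capacity
lower bound is sharp. -/
theorem capacity_lower_bound_sharp_positive_curvature
    (k l a W : ℝ) (hk : 0 < k) (hl : 0 < l) (ha : 0 ≤ a)
    (haW : -a < W) (hW : W < π / (2 * k)) (ha' : -(π / (2 * k)) < -a)
    (p : ℝ × ℝ → ℝ)
    (hp : ∀ t s : ℝ, p (t, s) = (h₂ (k * s) - h₂ (-(k * a))) / (h₂ (k * W) - h₂ (-(k * a))))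
    (A : Set (ℝ × ℝ)) (hA : A = Icc 0 l ×ˢ Icc (-a) W) :
    (∀ t : ℝ, p (t, -a) = 0) ∧ (∀ t : ℝ, p (t, W) = 1) ∧
    (∫ q in A, Real.cos (k * q.2)) = (l / k) * (Real.sin (k * W) + Real.sin (k * a)) ∧
    (∫ q in A, ((deriv (fun t => p (t, q.2)) q.1) ^ 2 / Real.cos (k * q.2)
        + Real.cos (k * q.2) * (deriv (fun s => p (q.1, s)) q.2) ^ 2))
      = k * l / (h₂ (k * W) - h₂ (-(k * a))) :=
  capacity_lower_bound_sharp_positive_curvature_general k l a W hk hl haW hW ha' p hp A hA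
end

section
/- Let l > 0. Let A ⊆ [0,l] × ℝ be a measurable set of finite Lebesgue measure |A| > 0, and let f : ℝ × ℝ → ℝ be Lipschitz such that for every t ∈ [0,l] there exist α < β with {t} × (α,β) ⊆ A, f(t,α) = 0 and f(t,β) = 1. Then the Dirichlet energy satisfies ∬_A |∇f|² ds dt ≥ l² / |A|. (This is the flat, k → 0, limit case of the capacity lower bound: on a Euclidean cylinder of circumference l, every non-contractible annulus A satisfies cap(A) ≥ l²/area(A).) -/
open MeasureTheory Set
open scoped NNReal ENNReal

/-! On each vertical line `{t} × ℝ`, `f` rises from `0` to `1` across a segment of the slice `A_t`;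
since `s ↦ f (t, s)` is Lipschitz, hence absolutely continuous, `1 ≤ ∫_{A_t} |∂ₛf|`, and
Cauchy–Schwarz gives `1 ≤ (|A_t| ∫_{A_t} |∂ₛf|²)^{1/2}`. Integrating over `t ∈ [0, l]` and
applying Cauchy–Schwarz once more gives
`l ≤ (∫ |A_t| dt · ∫ ∫_{A_t} |∂ₛf|² ds dt)^{1/2} ≤ (|A| ∬_A |∇f|²)^{1/2}`. -/

theorem ENNReal.sq_lintegral_rpow_half_mul_le {α : Type*} [MeasurableSpace α] {μ : Measure α}
    {f g : α → ℝ≥0∞} (hf : AEMeasurable f μ) (hg : AEMeasurable g μ) :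
    (∫⁻ a, (f a * g a) ^ (1 / 2 : ℝ) ∂μ) ^ 2 ≤ (∫⁻ a, f a ∂μ) * ∫⁻ a, g a ∂μ := by
  have sq_rpow_half : ∀ x : ℝ≥0∞, (x ^ (1 / 2 : ℝ)) ^ 2 = x := fun x => by
    rw [← ENNReal.rpow_natCast, ← ENNReal.rpow_mul]; norm_num
  calc (∫⁻ a, (f a * g a) ^ (1 / 2 : ℝ) ∂μ) ^ 2
      = (∫⁻ a, f a ^ (1 / 2 : ℝ) * g a ^ (1 / 2 : ℝ) ∂μ) ^ 2 := by
        simp_rw [ENNReal.mul_rpow_of_nonneg _ _ (by norm_num : (0 : ℝ) ≤ 1 / 2)]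
    _ ≤ ((∫⁻ a, f a ∂μ) ^ (1 / 2 : ℝ) * (∫⁻ a, g a ∂μ) ^ (1 / 2 : ℝ)) ^ 2 := by
        gcongr
        exact ENNReal.lintegral_mul_norm_pow_le hf hg (by norm_num) (by norm_num) (by norm_num)
    _ = (∫⁻ a, f a ∂μ) * ∫⁻ a, g a ∂μ := by rw [mul_pow, sq_rpow_half, sq_rpow_half]

theorem sq_setLIntegral_le_measure_mul_setLIntegral_sq {α : Type*} [MeasurableSpace α]
    {μ : Measure α} {s : Set α} {g : α → ℝ≥0∞} (hg : AEMeasurable g (μ.restrict s)) :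
    (∫⁻ x in s, g x ∂μ) ^ 2 ≤ μ s * ∫⁻ x in s, g x ^ 2 ∂μ := by
  have := ENNReal.sq_lintegral_rpow_half_mul_le aemeasurable_const (hg.pow_const 2)
    (f := fun _ => (1 : ℝ≥0∞))
  simp_rw [one_mul, ← ENNReal.rpow_natCast, ← ENNReal.rpow_mul] at this
  simpa using this

section Slices

variable {α β : Type*} [MeasurableSpace α] [MeasurableSpace β] {μ : Measure α} {ν : Measure β}
  {A : Set (α × β)} {f : α × β → ℝ≥0∞}

theorem setLIntegral_preimage_prodMk_eq_lintegral_indicator (hA : MeasurableSet A) (x : α) :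
    ∫⁻ y in Prod.mk x ⁻¹' A, f (x, y) ∂ν = ∫⁻ y, A.indicator f (x, y) ∂ν := by
  rw [← lintegral_indicator (hA.preimage measurable_prodMk_left)]
  rfl

theorem Measurable.setLIntegral_preimage_prodMk [SFinite ν] (hA : MeasurableSet A)
    (hf : Measurable f) : Measurable fun x => ∫⁻ y in Prod.mk x ⁻¹' A, f (x, y) ∂ν := by
  simp_rw [setLIntegral_preimage_prodMk_eq_lintegral_indicator hA]
  exact (hf.indicator hA).lintegral_prod_right'

theorem lintegral_setLIntegral_preimage_prodMk [SFinite ν] (hA : MeasurableSet A)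
    (hf : Measurable f) :
    ∫⁻ x, ∫⁻ y in Prod.mk x ⁻¹' A, f (x, y) ∂ν ∂μ = ∫⁻ p in A, f p ∂μ.prod ν := by
  simp_rw [setLIntegral_preimage_prodMk_eq_lintegral_indicator hA, ← lintegral_indicator hA]
  exact (lintegral_prod _ (hf.indicator hA).aemeasurable).symm

theorem measure_sq_le_measure_prod_mul_setLIntegral_sq [SFinite ν] (hA : MeasurableSet A)
    {g : α × β → ℝ≥0∞} (hg : Measurable g) {T : Set α}
    (hT : ∀ x ∈ T, 1 ≤ ∫⁻ y in Prod.mk x ⁻¹' A, g (x, y) ∂ν) :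
    μ T ^ 2 ≤ μ.prod ν A * ∫⁻ p in A, g p ^ 2 ∂μ.prod ν := by
  set V := fun x => ν (Prod.mk x ⁻¹' A)
  set F := fun x => ∫⁻ y in Prod.mk x ⁻¹' A, g (x, y) ^ 2 ∂ν
  have hV : Measurable V := measurable_measure_prodMk_left hA
  have hF : Measurable F := (hg.pow_const 2).setLIntegral_preimage_prodMk hA
  have hVF : ∀ x ∈ T, 1 ≤ (V x * F x) ^ (1 / 2 : ℝ) := fun x hx =>
    ENNReal.one_le_rpow ((one_le_pow₀ (hT x hx)).trans
      (sq_setLIntegral_le_measure_mul_setLIntegral_sq (by fun_prop))) (by norm_num)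
  calc μ T ^ 2 = (∫⁻ _ in T, 1 ∂μ) ^ 2 := by rw [setLIntegral_one]
    _ ≤ (∫⁻ x in T, (V x * F x) ^ (1 / 2 : ℝ) ∂μ) ^ 2 := by
        gcongr 1
        exact setLIntegral_mono (by fun_prop) hVF
    _ ≤ (∫⁻ x in T, V x ∂μ) * ∫⁻ x in T, F x ∂μ :=
        ENNReal.sq_lintegral_rpow_half_mul_le hV.aemeasurable hF.aemeasurable
    _ ≤ (∫⁻ x, V x ∂μ) * ∫⁻ x, F x ∂μ := by
        gcongr <;> exact Measure.restrict_le_self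
    _ = μ.prod ν A * ∫⁻ p in A, g p ^ 2 ∂μ.prod ν := by
        rw [← Measure.prod_apply hA, lintegral_setLIntegral_preimage_prodMk hA (hg.pow_const 2)]

end Slices

theorem LipschitzWith.ofReal_sub_le_lintegral_enorm_deriv {C : ℝ≥0} {φ : ℝ → ℝ}
    (hφ : LipschitzWith C φ) {a b : ℝ} (hab : a ≤ b) :
    ENNReal.ofReal (φ b - φ a) ≤ ∫⁻ s in Ioo a b, ‖deriv φ s‖ₑ := by
  rw [← (hφ.lipschitzOnWith (s := uIcc a b)).absolutelyContinuousOnInterval.integral_deriv_eq_sub,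
    intervalIntegral.integral_of_le hab, integral_Ioc_eq_integral_Ioo]
  exact (Real.ofReal_le_enorm _).trans (enorm_integral_le_lintegral_enorm _)

noncomputable def partialDerivFst (f : ℝ × ℝ → ℝ) (p : ℝ × ℝ) : ℝ :=
  deriv (fun t => f (t, p.2)) p.1

noncomputable def partialDerivSnd (f : ℝ × ℝ → ℝ) (p : ℝ × ℝ) : ℝ :=
  deriv (fun s => f (p.1, s)) p.2

section PartialDeriv

variable {f : ℝ × ℝ → ℝ}

theorem Continuous.measurable_partialDerivFst (hf : Continuous f) :
    Measurable (partialDerivFst f) :=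
  (measurable_deriv_with_param (f := fun s t => f (t, s)) (hf.comp continuous_swap)).comp
    measurable_swap

theorem Continuous.measurable_partialDerivSnd (hf : Continuous f) :
    Measurable (partialDerivSnd f) :=
  measurable_deriv_with_param (f := fun t s => f (t, s)) hf

theorem LipschitzWith.abs_partialDerivFst_le {C : ℝ≥0} (hf : LipschitzWith C f) (p : ℝ × ℝ) :
    |partialDerivFst f p| ≤ C := by
  have := norm_deriv_le_of_lipschitz (x₀ := p.1) (hf.comp (LipschitzWith.prodMk_right p.2))
  rwa [mul_one, Real.norm_eq_abs] at this

theorem LipschitzWith.abs_partialDerivSnd_le {C : ℝ≥0} (hf : LipschitzWith C f) (p : ℝ × ℝ) :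
    |partialDerivSnd f p| ≤ C := by
  have := norm_deriv_le_of_lipschitz (x₀ := p.2) (hf.comp (LipschitzWith.prodMk_left p.1))
  rwa [mul_one, Real.norm_eq_abs] at this

theorem LipschitzWith.integrableOn_sq_partialDerivFst_add_sq_partialDerivSnd {C : ℝ≥0}
    (hf : LipschitzWith C f) {μ : Measure (ℝ × ℝ)} {A : Set (ℝ × ℝ)} (hA : μ A ≠ ∞) :
    IntegrableOn (fun p => partialDerivFst f p ^ 2 + partialDerivSnd f p ^ 2) A μ := by
  have hmeas : Measurable fun p => partialDerivFst f p ^ 2 + partialDerivSnd f p ^ 2 := by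
    have := hf.continuous.measurable_partialDerivFst
    have := hf.continuous.measurable_partialDerivSnd
    fun_prop
  refine Measure.integrableOn_of_bounded (M := C ^ 2 + C ^ 2) hA hmeas.aestronglyMeasurable
    (ae_of_all _ fun p => ?_)
  rw [Real.norm_of_nonneg (by positivity), ← sq_abs, ← sq_abs (partialDerivSnd f p)]
  gcongr
  exacts [hf.abs_partialDerivFst_le p, hf.abs_partialDerivSnd_le p]

theorem LipschitzWith.setLIntegral_enorm_partialDerivSnd_sq_le {C : ℝ≥0}
    (hf : LipschitzWith C f) {μ : Measure (ℝ × ℝ)} {A : Set (ℝ × ℝ)} (hA : μ A ≠ ∞) :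
    ∫⁻ p in A, ‖partialDerivSnd f p‖ₑ ^ 2 ∂μ ≤
      ENNReal.ofReal (∫ p in A, partialDerivFst f p ^ 2 + partialDerivSnd f p ^ 2 ∂μ) := by
  rw [ofReal_integral_eq_lintegral_ofReal
    (hf.integrableOn_sq_partialDerivFst_add_sq_partialDerivSnd hA)
    (ae_of_all _ fun p => by positivity)]
  refine lintegral_mono fun p => ?_
  rw [Real.enorm_eq_ofReal_abs, ← ENNReal.ofReal_pow (abs_nonneg _), sq_abs]
  exact ENNReal.ofReal_le_ofReal (le_add_of_nonneg_left (sq_nonneg _))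

end PartialDeriv

theorem capacity_lower_bound_flat_general
    (l : ℝ) (hl : 0 < l)
    (A : Set (ℝ × ℝ)) (hA : MeasurableSet A)
    (hfin : volume A < ⊤)
    (f : ℝ × ℝ → ℝ) (C : ℝ≥0) (hf : LipschitzWith C f)
    (hbdry : ∀ t ∈ Icc (0 : ℝ) l, ∃ α β : ℝ, α < β ∧ ({t} ×ˢ Ioo α β) ⊆ A ∧
      f (t, α) = 0 ∧ f (t, β) = 1) :
    l ^ 2 / (volume A).toReal ≤
      ∫ p in A, ((deriv (fun t => f (t, p.2)) p.1) ^ 2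
        + (deriv (fun s => f (p.1, s)) p.2) ^ 2) := by
  have hslice :
      ∀ t ∈ Icc (0 : ℝ) l, 1 ≤ ∫⁻ s in Prod.mk t ⁻¹' A, ‖partialDerivSnd f (t, s)‖ₑ := by
    intro t ht
    obtain ⟨α, β, hαβ, hsub, h0, h1⟩ := hbdry t ht
    calc (1 : ℝ≥0∞) = ENNReal.ofReal (f (t, β) - f (t, α)) := by simp [h0, h1]
      _ ≤ ∫⁻ s in Ioo α β, ‖partialDerivSnd f (t, s)‖ₑ :=
          (hf.comp (LipschitzWith.prodMk_left t)).ofReal_sub_le_lintegral_enorm_deriv hαβ.le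
      _ ≤ ∫⁻ s in Prod.mk t ⁻¹' A, ‖partialDerivSnd f (t, s)‖ₑ :=
          lintegral_mono_set fun s hs => hsub ⟨rfl, hs⟩
  have hl_sq : ENNReal.ofReal l ^ 2 ≤ volume A * ∫⁻ p in A, ‖partialDerivSnd f p‖ₑ ^ 2 := by
    simpa [Real.volume_Icc, ← Measure.volume_eq_prod] using
      measure_sq_le_measure_prod_mul_setLIntegral_sq (μ := volume) hA
        hf.continuous.measurable_partialDerivSnd.enorm hslice
  have hE : 0 ≤ ∫ p in A, partialDerivFst f p ^ 2 + partialDerivSnd f p ^ 2 :=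
    integral_nonneg fun p => by positivity
  have hreal := ENNReal.toReal_mono (ENNReal.mul_ne_top hfin.ne ENNReal.ofReal_ne_top)
    (hl_sq.trans (by gcongr; exact hf.setLIntegral_enorm_partialDerivSnd_sq_le hfin.ne))
  rw [ENNReal.toReal_pow, ENNReal.toReal_ofReal hl.le, ENNReal.toReal_mul,
    ENNReal.toReal_ofReal hE] at hreal
  exact div_le_of_le_mul₀ ENNReal.toReal_nonneg hE (hreal.trans_eq (mul_comm _ _))

/-- flat case of the capacity lower bound: on the Euclidean cylinder
of circumference `l`, any measurable `A ⊆ [0,l] × ℝ` of finite positive area and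
any Lipschitz `f` passing from `0` to `1` across `A` along every vertical line
satisfy `∬_A |∇f|² ≥ l² / |A|`. -/
theorem capacity_lower_bound_flat
    (l : ℝ) (hl : 0 < l)
    (A : Set (ℝ × ℝ)) (hA : MeasurableSet A) (hAsub : A ⊆ Icc 0 l ×ˢ univ)
    (hfin : volume A < ⊤) (hposm : 0 < volume A)
    (f : ℝ × ℝ → ℝ) (C : ℝ≥0) (hf : LipschitzWith C f)
    (hbdry : ∀ t ∈ Icc (0 : ℝ) l, ∃ α β : ℝ, α < β ∧ ({t} ×ˢ Ioo α β) ⊆ A ∧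
      f (t, α) = 0 ∧ f (t, β) = 1) :
    l ^ 2 / (volume A).toReal ≤
      ∫ p in A, ((deriv (fun t => f (t, p.2)) p.1) ^ 2
        + (deriv (fun s => f (p.1, s)) p.2) ^ 2) :=
  capacity_lower_bound_flat_general l hl A hA hfin f C hf hbdry
end

section
/- Let a < b, let h : [a,b] → ℝ be positive and continuous, and let g : [a,b] → ℝ be Lipschitz with g(a) = 0 and g(b) = 1. Then ∫ₐᵇ h(s)·g'(s)² ds ≥ ( ∫ₐᵇ ds / h(s) )⁻¹. -/
/-!
Since `g` is Lipschitz it is absolutely continuous, so `∫ₐᵇ g' = g b - g a = 1`. The theorem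
is then the weighted Cauchy–Schwarz inequality `(∫ f)² ≤ (∫ h f²) (∫ 1/h)`, which
follows from the nonnegativity of the quadratic `t ↦ ∫ h (f - t/h)²`.
-/

open Set intervalIntegral MeasureTheory

theorem LipschitzWith.intervalIntegrable_deriv_sq {C : NNReal} {g : ℝ → ℝ}
    (hg : LipschitzWith C g) (a b : ℝ) :
    IntervalIntegrable (fun s => deriv g s ^ 2) volume a b := by
  have hg' := hg.lipschitzOnWith (s := uIcc a b) |>.absolutelyContinuousOnInterval
    |>.intervalIntegrable_deriv
  simp_rw [sq]
  rw [intervalIntegrable_iff] at hg' ⊢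
  exact hg'.mul_bdd (measurable_deriv g).aestronglyMeasurable
    (ae_of_all _ fun _ => norm_deriv_le_of_lipschitz hg)

theorem LipschitzWith.integral_deriv_eq_sub {C : NNReal} {g : ℝ → ℝ}
    (hg : LipschitzWith C g) (a b : ℝ) : ∫ s in a..b, deriv g s = g b - g a :=
  (hg.lipschitzOnWith (s := uIcc a b)).absolutelyContinuousOnInterval.integral_deriv_eq_sub

theorem sq_integral_le_integral_mul_sq_mul_integral_inv {f h : ℝ → ℝ} {a b : ℝ}
    (hab : a ≤ b) (hpos : ∀ s ∈ Icc a b, 0 < h s) (hf : IntervalIntegrable f volume a b)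
    (hhf : IntervalIntegrable (fun s => h s * f s ^ 2) volume a b)
    (hh : IntervalIntegrable (fun s => 1 / h s) volume a b) :
    (∫ s in a..b, f s) ^ 2 ≤ (∫ s in a..b, h s * f s ^ 2) * ∫ s in a..b, 1 / h s := by
  set A := ∫ s in a..b, h s * f s ^ 2
  set B := ∫ s in a..b, f s
  set D := ∫ s in a..b, 1 / h s
  have quadratic_nonneg : ∀ t : ℝ, 0 ≤ D * (t * t) + (-2 * B) * t + A := by
    intro t
    have expand : ∀ s ∈ Icc a b,
        h s * (f s - t / h s) ^ 2 = h s * f s ^ 2 - 2 * t * f s + t ^ 2 * (1 / h s) := by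
      intro s hs
      field_simp [(hpos s hs).ne']
      ring
    have hint : 0 ≤ ∫ s in a..b, (h s * f s ^ 2 - 2 * t * f s + t ^ 2 * (1 / h s)) :=
      integral_nonneg hab fun s hs => expand s hs ▸ mul_nonneg (hpos s hs).le (sq_nonneg _)
    rw [integral_add (hhf.sub (hf.const_mul _)) (hh.const_mul _),
      integral_sub hhf (hf.const_mul _), intervalIntegral.integral_const_mul,
      intervalIntegral.integral_const_mul] at hint
    linarith
  have hdisc := discrim_le_zero quadratic_nonneg
  rw [discrim] at hdisc
  linarith

/-- One-dimensional weighted capacity lemma: if `h` is positive and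
continuous on `[a,b]` and `g` is Lipschitz with `g a = 0`, `g b = 1`, then
`∫ₐᵇ h · g'² ≥ (∫ₐᵇ 1/h)⁻¹`. -/
theorem one_dim_weighted_capacity (a b : ℝ) (hab : a < b) (h g : ℝ → ℝ)
    (hpos : ∀ s ∈ Icc a b, 0 < h s) (hcont : ContinuousOn h (Icc a b))
    (C : NNReal) (hg : LipschitzWith C g) (hga : g a = 0) (hgb : g b = 1) :
    (∫ s in a..b, 1 / h s)⁻¹ ≤ ∫ s in a..b, h s * (deriv g s) ^ 2 := by
  have hI : uIcc a b = Icc a b := uIcc_of_le hab.le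
  rw [← hI] at hcont
  have hinv : IntervalIntegrable (fun s => 1 / h s) volume a b :=
    (continuousOn_const.div hcont fun s hs => (hpos s (hI ▸ hs)).ne').intervalIntegrable
  have hD : 0 < ∫ s in a..b, 1 / h s :=
    intervalIntegral_pos_of_pos_on hinv
      (fun s hs => one_div_pos.2 (hpos s (Ioo_subset_Icc_self hs))) hab
  have hFTC : ∫ s in a..b, deriv g s = 1 := by
    rw [hg.integral_deriv_eq_sub, hga, hgb, sub_zero]
  have hCS := sq_integral_le_integral_mul_sq_mul_integral_inv hab.le hpos
    hg.lipschitzOnWith.absolutelyContinuousOnInterval.intervalIntegrable_deriv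
    ((hg.intervalIntegrable_deriv_sq a b).continuousOn_mul hcont) hinv
  rw [hFTC, one_pow] at hCS
  exact (inv_le_iff_one_le_mul₀ hD).2 hCS
end

section
/- Let l > 0, let h : ℝ × ℝ → ℝ be positive and continuous, and let a₁, a₂ : [0,l] → ℝ be continuous with a₁(t) < a₂(t) for all t. Let A = {(t,s) : t ∈ [0,l], a₁(t) < s < a₂(t)} (an annulus of type A), and let f be Lipschitz on the closure of A with f(t, a₁(t)) = 0 and f(t, a₂(t)) = 1 for all t ∈ [0,l]. Then ∬_A ( (∂_t f)²/h + h·(∂_s f)² ) ds dt ≥ ∫₀ˡ ( ∫_{a₁(t)}^{a₂(t)} ds / h(t,s) )⁻¹ dt. In particular the capacity of A is at least ∫₀ˡ dt / (H(t,a₂(t)) − H(t,a₁(t))), where H(t,·) is an antiderivative of 1/h(t,·). -/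
/-!
Extend `f` to a globally Lipschitz `F` (McShane). On the open region
`{0 < t < l, a₁ t < s < a₂ t}`, which has full measure in `A`, both partial derivatives of `f`
agree with those of `F`. Dropping the `t`-derivative term and applying Fubini, it suffices to
bound each slice `∫ h(t,s) (∂ₛF)² ds` from below. Since `s ↦ F (t, s)` is Lipschitz, hence
absolutely continuous, `∫ ∂ₛF ds = F(t, a₂ t) - F(t, a₁ t) = 1`, and the weighted
Cauchy–Schwarz inequality `(∫ g)² ≤ (∫ 1/w) (∫ w g²)` gives the slice bound
`(∫ ds / h(t,s))⁻¹`.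
-/

open Real MeasureTheory Set Filter
open scoped NNReal

theorem sq_integral_div_integral_inv_le_integral_mul_sq {α : Type*} [MeasurableSpace α]
    {μ : Measure α} {w g : α → ℝ} (hw : ∀ᵐ x ∂μ, 0 < w x) (hg : Integrable g μ)
    (hwg : Integrable (fun x => w x * g x ^ 2) μ) (hw' : Integrable (fun x => 1 / w x) μ) :
    (∫ x, g x ∂μ) ^ 2 / ∫ x, 1 / w x ∂μ ≤ ∫ x, w x * g x ^ 2 ∂μ := by
  set I := ∫ x, g x ∂μ
  set B := ∫ x, 1 / w x ∂μ
  set c := I / B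
  -- Integrate `w g² - 2 c g + c² / w = (w g - c)² / w ≥ 0`.
  have key : 0 ≤ ∫ x, (w x * g x ^ 2 - 2 * c * g x + c ^ 2 * (1 / w x)) ∂μ := by
    refine integral_nonneg_of_ae ?_
    filter_upwards [hw] with x hx
    have : w x * g x ^ 2 - 2 * c * g x + c ^ 2 * (1 / w x) = (w x * g x - c) ^ 2 / w x := by
      field_simp; ring
    rw [this]; positivity
  have hlin : Integrable (fun x => w x * g x ^ 2 - 2 * c * g x) μ := hwg.sub (hg.const_mul _)
  rw [integral_add hlin (hw'.const_mul _), integral_sub hwg (hg.const_mul _),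
    integral_const_mul, integral_const_mul] at key
  rcases eq_or_ne B 0 with hB | hB
  · rw [hB, div_zero]; simpa [c, hB] using key
  · have : c ^ 2 * B = c * I := by simp only [c]; field_simp
    have : I ^ 2 / B = c * I := by simp only [c]; ring
    linarith

theorem LipschitzWith.sq_sub_div_integral_inv_le_integral_mul_deriv_sq {G : ℝ → ℝ}
    {C : ℝ≥0} (hG : LipschitzWith C G) {w : ℝ → ℝ} {a b : ℝ} (hab : a ≤ b)
    (hw : ContinuousOn w (Icc a b)) (hwpos : ∀ x ∈ Icc a b, 0 < w x) :
    (G b - G a) ^ 2 / ∫ x in a..b, 1 / w x ≤ ∫ x in a..b, w x * deriv G x ^ 2 := by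
  have hw' : ∀ᵐ x ∂volume.restrict (Ioc a b), 0 < w x :=
    ae_restrict_of_forall_mem measurableSet_Ioc fun x hx => hwpos x (Ioc_subset_Icc_self hx)
  have hderiv_sq : ∀ x, ‖deriv G x ^ 2‖ ≤ (C : ℝ) ^ 2 := fun x => by
    rw [norm_pow]; exact pow_le_pow_left₀ (norm_nonneg _) (norm_deriv_le_of_lipschitz hG) 2
  have hwg : IntegrableOn (fun x => w x * deriv G x ^ 2) (Ioc a b) :=
    (hw.integrableOn_Icc.mono_set Ioc_subset_Icc_self).mul_bdd
      ((measurable_deriv G).pow_const 2).aestronglyMeasurable (Eventually.of_forall hderiv_sq)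
  have hw_inv : IntegrableOn (fun x => 1 / w x) (Ioc a b) :=
    ((continuousOn_const.div hw fun x hx => (hwpos x hx).ne').integrableOn_Icc).mono_set
      Ioc_subset_Icc_self
  have hG_ac := (hG.lipschitzOnWith (s := uIcc a b)).absolutelyContinuousOnInterval
  rw [← hG_ac.integral_deriv_eq_sub]
  simp only [intervalIntegral.integral_of_le hab]
  exact sq_integral_div_integral_inv_le_integral_mul_sq hw'
    ((intervalIntegrable_iff_integrableOn_Ioc_of_le hab).1 hG_ac.intervalIntegrable_deriv)
    hwg hw_inv

section RegionBetween

variable {α : Type*} {f g : α → ℝ} {s : Set α}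

theorem isOpen_regionBetween [TopologicalSpace α] (hf : Continuous f) (hg : Continuous g)
    (hs : IsOpen s) : IsOpen (regionBetween f g s) :=
  (hs.preimage continuous_fst).inter ((isOpen_lt (hf.comp continuous_fst) continuous_snd).inter
    (isOpen_lt continuous_snd (hg.comp continuous_fst)))

theorem isBounded_regionBetween [PseudoMetricSpace α] [ProperSpace α] (hf : Continuous f)
    (hg : Continuous g) (hs : Bornology.IsBounded s) :
    Bornology.IsBounded (regionBetween f g s) := by
  obtain ⟨m, hm⟩ := (hs.isCompact_closure.image hf).bddBelow
  obtain ⟨M, hM⟩ := (hs.isCompact_closure.image hg).bddAbove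
  refine (hs.prod (Metric.isBounded_Icc m M)).subset ?_
  rintro ⟨x, y⟩ ⟨hx, hfy, hyg⟩
  exact ⟨hx, (hm ⟨x, subset_closure hx, rfl⟩).trans hfy.le,
    hyg.le.trans (hM ⟨x, subset_closure hx, rfl⟩)⟩

theorem indicator_regionBetween_apply {E : Type*} [Zero E] (F : α × ℝ → E) (x : α) (y : ℝ) :
    (regionBetween f g s).indicator F (x, y) =
      s.indicator (fun x => (Ioo (f x) (g x)).indicator (fun y => F (x, y)) y) x := by
  by_cases hx : x ∈ s
  · rw [indicator_of_mem hx]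
    by_cases hy : y ∈ Ioo (f x) (g x)
    · rw [indicator_of_mem (show (x, y) ∈ regionBetween f g s from ⟨hx, hy⟩),
        indicator_of_mem hy]
    · rw [indicator_of_notMem (fun h => hy h.2), indicator_of_notMem hy]
  · rw [indicator_of_notMem hx, indicator_of_notMem (fun h => hx h.1)]

variable {E : Type*} [NormedAddCommGroup E] [NormedSpace ℝ E]

theorem integral_indicator_regionBetween_eq (F : α × ℝ → E) :
    (fun x => ∫ y, (regionBetween f g s).indicator F (x, y)) =
      s.indicator (fun x => ∫ y in Ioo (f x) (g x), F (x, y)) := by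
  ext x
  simp_rw [indicator_regionBetween_apply]
  by_cases hx : x ∈ s
  · simp only [hx, indicator_of_mem, integral_indicator measurableSet_Ioo]
  · simp only [hx, not_false_eq_true, indicator_of_notMem, integral_zero]

variable [MeasurableSpace α] {μ : Measure α}

theorem regionBetween_ae_eq {s' : Set α} (hs : s =ᵐ[μ] s') :
    regionBetween f g s =ᵐ[μ.prod volume] regionBetween f g s' := by
  have hsplit : ∀ t : Set α, regionBetween f g t = Prod.fst ⁻¹' t ∩ regionBetween f g univ := by
    intro t; ext p; simp [regionBetween]
  rw [hsplit s, hsplit s']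
  exact (Measure.quasiMeasurePreserving_fst.preimage_ae_eq hs).inter EventuallyEq.rfl

theorem MeasureTheory.IntegrableOn.integrableOn_integral_regionBetween (hf : Measurable f)
    (hg : Measurable g) (hs : MeasurableSet s) {F : α × ℝ → E}
    (hF : IntegrableOn F (regionBetween f g s) (μ.prod volume)) :
    IntegrableOn (fun x => ∫ y in Ioo (f x) (g x), F (x, y)) s μ := by
  rw [← integrable_indicator_iff hs, ← integral_indicator_regionBetween_eq]
  exact ((integrable_indicator_iff (measurableSet_regionBetween hf hg hs)).2 hF).integral_prod_left

theorem setIntegral_regionBetween [SFinite μ] (hf : Measurable f) (hg : Measurable g)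
    (hs : MeasurableSet s) {F : α × ℝ → E}
    (hF : IntegrableOn F (regionBetween f g s) (μ.prod volume)) :
    ∫ p in regionBetween f g s, F p ∂μ.prod volume =
      ∫ x in s, (∫ y in Ioo (f x) (g x), F (x, y)) ∂μ := by
  have hR := measurableSet_regionBetween hf hg hs
  rw [← integral_indicator hR, integral_prod _ ((integrable_indicator_iff hR).2 hF),
    integral_indicator_regionBetween_eq, integral_indicator hs]

end RegionBetween

noncomputable section

def partialFst (f : ℝ × ℝ → ℝ) (p : ℝ × ℝ) : ℝ := deriv (fun t => f (t, p.2)) p.1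

def partialSnd (f : ℝ × ℝ → ℝ) (p : ℝ × ℝ) : ℝ := deriv (fun s => f (p.1, s)) p.2

def energyDensity (h f : ℝ × ℝ → ℝ) (p : ℝ × ℝ) : ℝ :=
  partialFst f p ^ 2 / h p + h p * partialSnd f p ^ 2

def dirichletEnergy (h : ℝ × ℝ → ℝ) (A : Set (ℝ × ℝ)) (f : ℝ × ℝ → ℝ) : ℝ :=
  ∫ p in A, energyDensity h f p

end

section PartialDerivatives

variable {f g : ℝ × ℝ → ℝ}

theorem Continuous.measurable_partialFst (hf : Continuous f) : Measurable (partialFst f) :=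
  (measurable_deriv_with_param (f := fun s t => f (t, s)) (hf.comp continuous_swap)).comp
    measurable_swap

theorem Continuous.measurable_partialSnd (hf : Continuous f) : Measurable (partialSnd f) :=
  measurable_deriv_with_param (f := fun t s => f (t, s)) hf

theorem LipschitzWith.abs_partialFst_le {C : ℝ≥0} (hf : LipschitzWith C f) (p : ℝ × ℝ) :
    |partialFst f p| ≤ C := by
  have hline : LipschitzWith C fun t => f (t, p.2) := by
    simpa [Function.comp_def] using hf.comp (LipschitzWith.prodMk_right p.2)
  exact (Real.norm_eq_abs _).ge.trans (norm_deriv_le_of_lipschitz hline)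

theorem LipschitzWith.abs_partialSnd_le {C : ℝ≥0} (hf : LipschitzWith C f) (p : ℝ × ℝ) :
    |partialSnd f p| ≤ C := by
  have hline : LipschitzWith C fun s => f (p.1, s) := by
    simpa [Function.comp_def] using hf.comp (LipschitzWith.prodMk_left p.1)
  exact (Real.norm_eq_abs _).ge.trans (norm_deriv_le_of_lipschitz hline)

theorem energyDensity_eqOn {U : Set (ℝ × ℝ)} (hU : IsOpen U) (hfg : EqOn f g U)
    (h : ℝ × ℝ → ℝ) : EqOn (energyDensity h f) (energyDensity h g) U := by
  intro p hp
  have hfst : partialFst f p = partialFst g p := EventuallyEq.deriv_eq <|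
    eventually_of_mem ((continuous_id.prodMk continuous_const).continuousAt.preimage_mem_nhds
      (hU.mem_nhds hp)) fun t ht => hfg ht
  have hsnd : partialSnd f p = partialSnd g p := EventuallyEq.deriv_eq <|
    eventually_of_mem ((continuous_const.prodMk continuous_id).continuousAt.preimage_mem_nhds
      (hU.mem_nhds hp)) fun s hs => hfg hs
  simp only [energyDensity, hfst, hsnd]

end PartialDerivatives

theorem mul_partialSnd_sq_le_energyDensity {h f : ℝ × ℝ → ℝ} {p : ℝ × ℝ} (hp : 0 ≤ h p) :
    h p * partialSnd f p ^ 2 ≤ energyDensity h f p :=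
  le_add_of_nonneg_left (div_nonneg (sq_nonneg _) hp)

theorem LipschitzWith.integrableOn_energyDensity {F h : ℝ × ℝ → ℝ} {C : ℝ≥0}
    (hF : LipschitzWith C F) (hh : Continuous h) (hpos : ∀ p, 0 < h p) {K : Set (ℝ × ℝ)}
    (hK : Bornology.IsBounded K) : IntegrableOn (energyDensity h F) K := by
  have hbound : IntegrableOn (fun p => (C : ℝ) ^ 2 / h p + h p * (C : ℝ) ^ 2) (closure K) :=
    (continuous_const.div hh fun p => (hpos p).ne').add (hh.mul continuous_const)
      |>.continuousOn.integrableOn_compact hK.isCompact_closure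
  have hmeas : Measurable (energyDensity h F) :=
    ((hF.continuous.measurable_partialFst.pow_const 2).div hh.measurable).add
      (hh.measurable.mul (hF.continuous.measurable_partialSnd.pow_const 2))
  refine (hbound.mono_set subset_closure).mono' hmeas.aestronglyMeasurable
    (Eventually.of_forall fun p => ?_)
  have hp := hpos p
  have hfst : partialFst F p ^ 2 ≤ (C : ℝ) ^ 2 :=
    sq_le_sq.2 ((hF.abs_partialFst_le p).trans (le_abs_self _))
  have hsnd : partialSnd F p ^ 2 ≤ (C : ℝ) ^ 2 :=
    sq_le_sq.2 ((hF.abs_partialSnd_le p).trans (le_abs_self _))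
  rw [Real.norm_of_nonneg (by unfold energyDensity; positivity)]
  exact add_le_add (div_le_div_of_nonneg_right hfst hp.le) (mul_le_mul_of_nonneg_left hsnd hp.le)

theorem LipschitzWith.setIntegral_inv_le_dirichletEnergy_regionBetween {F h : ℝ × ℝ → ℝ}
    {C : ℝ≥0} (hF : LipschitzWith C F) (hh : Continuous h) (hpos : ∀ p, 0 < h p)
    {a₁ a₂ : ℝ → ℝ} (ha₁ : Continuous a₁) (ha₂ : Continuous a₂) {s : Set ℝ}
    (hs : MeasurableSet s) (hsb : Bornology.IsBounded s) (h₁₂ : ∀ t ∈ s, a₁ t ≤ a₂ t)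
    (hbdry : ∀ t ∈ s, F (t, a₁ t) = 0 ∧ F (t, a₂ t) = 1) :
    ∫ t in s, (∫ y in (a₁ t)..(a₂ t), 1 / h (t, y))⁻¹ ≤
      dirichletEnergy h (regionBetween a₁ a₂ s) F := by
  set R := regionBetween a₁ a₂ s
  have hR : IntegrableOn (energyDensity h F) R :=
    hF.integrableOn_energyDensity hh hpos (isBounded_regionBetween ha₁ ha₂ hsb)
  have hR_snd : IntegrableOn (fun p => h p * partialSnd F p ^ 2) R (volume.prod volume) := by
    refine hR.mono'
      (hh.measurable.mul (hF.continuous.measurable_partialSnd.pow_const 2)).aestronglyMeasurable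
      (Eventually.of_forall fun p => ?_)
    rw [Real.norm_of_nonneg (mul_nonneg (hpos p).le (sq_nonneg _))]
    exact mul_partialSnd_sq_le_energyDensity (hpos p).le
  have hslice : ∀ t ∈ s, (∫ y in (a₁ t)..(a₂ t), 1 / h (t, y))⁻¹ ≤
      ∫ y in Ioo (a₁ t) (a₂ t), h (t, y) * partialSnd F (t, y) ^ 2 := by
    intro t ht
    have hline : LipschitzWith C fun y => F (t, y) := by
      simpa [Function.comp_def] using hF.comp (LipschitzWith.prodMk_left t)
    have := hline.sq_sub_div_integral_inv_le_integral_mul_deriv_sq (w := fun y => h (t, y))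
      (h₁₂ t ht) (hh.comp (Continuous.prodMk_right t)).continuousOn fun y _ => hpos (t, y)
    rwa [(hbdry t ht).1, (hbdry t ht).2, sub_zero, one_pow, one_div,
      intervalIntegral.integral_of_le (h₁₂ t ht)
        (f := fun y => h (t, y) * deriv (fun y => F (t, y)) y ^ 2),
      integral_Ioc_eq_integral_Ioo] at this
  calc ∫ t in s, (∫ y in (a₁ t)..(a₂ t), 1 / h (t, y))⁻¹
      ≤ ∫ t in s, ∫ y in Ioo (a₁ t) (a₂ t), h (t, y) * partialSnd F (t, y) ^ 2 :=
        integral_mono_of_nonneg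
          (ae_restrict_of_forall_mem hs fun t ht => inv_nonneg.2 <|
            intervalIntegral.integral_nonneg (h₁₂ t ht) fun y _ => (one_div_pos.2 (hpos _)).le)
          (hR_snd.integrableOn_integral_regionBetween ha₁.measurable ha₂.measurable hs)
          (ae_restrict_of_forall_mem hs hslice)
    _ = ∫ p in R, h p * partialSnd F p ^ 2 :=
        (setIntegral_regionBetween ha₁.measurable ha₂.measurable hs hR_snd).symm
    _ ≤ dirichletEnergy h R F :=
        setIntegral_mono hR_snd hR fun p => mul_partialSnd_sq_le_energyDensity (hpos p).le

/-- lower capacity bound for an annulus of type A,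
`A = {(t,s) : t ∈ [0,l], a₁ t < s < a₂ t}`, on a cylinder with positive
continuous Fermi metric coefficient `h`: for every `f` Lipschitz on the closure
of `A` with `f (t, a₁ t) = 0` and `f (t, a₂ t) = 1`, the Dirichlet energy of `f`
on `A` is at least `∫₀ˡ (∫_{a₁ t}^{a₂ t} ds / h (t,s))⁻¹ dt`. -/
theorem capacity_lower_bound_typeA
    (l : ℝ) (hl : 0 < l)
    (h : ℝ × ℝ → ℝ) (hpos : ∀ p : ℝ × ℝ, 0 < h p) (hcont : Continuous h)
    (a₁ a₂ : ℝ → ℝ) (hc₁ : Continuous a₁) (hc₂ : Continuous a₂)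
    (h₁₂ : ∀ t ∈ Icc (0 : ℝ) l, a₁ t < a₂ t)
    (A : Set (ℝ × ℝ))
    (hA : A = {p : ℝ × ℝ | p.1 ∈ Icc (0 : ℝ) l ∧ p.2 ∈ Ioo (a₁ p.1) (a₂ p.1)})
    (f : ℝ × ℝ → ℝ) (C : ℝ≥0)
    (hf : LipschitzOnWith C f {p : ℝ × ℝ | p.1 ∈ Icc (0 : ℝ) l ∧ p.2 ∈ Icc (a₁ p.1) (a₂ p.1)})
    (hbdry : ∀ t ∈ Icc (0 : ℝ) l, f (t, a₁ t) = 0 ∧ f (t, a₂ t) = 1) :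
    (∫ t in (0 : ℝ)..l, (∫ s in (a₁ t)..(a₂ t), 1 / h (t, s))⁻¹) ≤
      ∫ p in A, ((deriv (fun t => f (t, p.2)) p.1) ^ 2 / h p
        + h p * (deriv (fun s => f (p.1, s)) p.2) ^ 2) := by
  obtain ⟨F, hF, hfF⟩ := hf.extend_real
  set A' := regionBetween a₁ a₂ (Ioo 0 l)
  have hAA' : A =ᵐ[volume] A' := by
    rw [hA, Measure.volume_eq_prod]; exact regionBetween_ae_eq Ioo_ae_eq_Icc.symm
  have hFf : EqOn F f A' := fun p hp =>
    (hfF ⟨Ioo_subset_Icc_self hp.1, Ioo_subset_Icc_self hp.2⟩).symm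
  have hbdryF : ∀ t ∈ Ioo 0 l, F (t, a₁ t) = 0 ∧ F (t, a₂ t) = 1 := fun t ht => by
    have ht := Ioo_subset_Icc_self ht
    rw [← hfF ⟨ht, left_mem_Icc.2 (h₁₂ t ht).le⟩, ← hfF ⟨ht, right_mem_Icc.2 (h₁₂ t ht).le⟩]
    exact hbdry t ht
  calc (∫ t in (0 : ℝ)..l, (∫ s in (a₁ t)..(a₂ t), 1 / h (t, s))⁻¹)
      = ∫ t in Ioo 0 l, (∫ s in (a₁ t)..(a₂ t), 1 / h (t, s))⁻¹ := by
        rw [intervalIntegral.integral_of_le hl.le, integral_Ioc_eq_integral_Ioo]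
    _ ≤ dirichletEnergy h A' F :=
        hF.setIntegral_inv_le_dirichletEnergy_regionBetween hcont hpos hc₁ hc₂ measurableSet_Ioo
          (Metric.isBounded_Ioo 0 l) (fun t ht => (h₁₂ t (Ioo_subset_Icc_self ht)).le) hbdryF
    _ = dirichletEnergy h A' f :=
        setIntegral_congr_fun (measurableSet_regionBetween hc₁.measurable hc₂.measurable
          measurableSet_Ioo) (energyDensity_eqOn (isOpen_regionBetween hc₁ hc₂ isOpen_Ioo) hFf h)
    _ = _ := setIntegral_congr_set hAA'.symm
end

section
/- Let 0 < k₁ ≤ k₂, let K : ℝ → ℝ be continuous with −k₂² ≤ K(s) ≤ −k₁² for all s, and let h : ℝ → ℝ be twice differentiable with h''(s) = −K(s)·h(s), h(0) = 1 and h'(0) = 0. Then for all s ∈ ℝ, cosh(k₁ s) ≤ h(s) ≤ cosh(k₂ s). -/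
/-!
Since `K ≤ 0`, the function `h h'` has derivative `h'² - K h² ≥ 0` and vanishes at `0`, so `h²`
is minimal at `0`; hence `h` never vanishes and stays positive. Then Sturm comparison: for a
solution `c` of `c'' = k² c` with `c'(0) = 0`, the Wronskian-type numerator of `(c / h)'`
(resp. `(h / c)'`) is monotone and vanishes at `0`, so the quotient is maximal at `0`. Taking
`c = cosh (k₁ ·)` and `c = cosh (k₂ ·)` gives the two bounds.
-/

open Set

theorem apply_le_apply_of_hasDerivAt_of_sign {f f' : ℝ → ℝ} {a : ℝ}
    (hf : ∀ x, HasDerivAt f (f' x) x) (hle : ∀ x ≤ a, f' x ≤ 0)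
    (hge : ∀ x, a ≤ x → 0 ≤ f' x) (x : ℝ) : f a ≤ f x := by
  have hcont : Continuous f := continuous_iff_continuousAt.2 fun x => (hf x).continuousAt
  rcases le_total a x with hax | hxa
  · refine monotoneOn_of_hasDerivWithinAt_nonneg (convex_Ici a) hcont.continuousOn
      (fun y _ => (hf y).hasDerivWithinAt) (fun y hy => hge y ?_) self_mem_Ici hax hax
    exact (interior_Ici (a := a) ▸ hy).le
  · refine antitoneOn_of_hasDerivWithinAt_nonpos (convex_Iic a) hcont.continuousOn
      (fun y _ => (hf y).hasDerivWithinAt) (fun y hy => hle y ?_) hxa self_mem_Iic hxa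
    exact (interior_Iic (a := a) ▸ hy).le

theorem sign_of_monotone_of_eq_zero {g : ℝ → ℝ} {a : ℝ} (hg : Monotone g) (ha : g a = 0) :
    (∀ x ≤ a, g x ≤ 0) ∧ ∀ x, a ≤ x → 0 ≤ g x :=
  ⟨fun _ hx => ha ▸ hg hx, fun _ hx => ha ▸ hg hx⟩

theorem sq_le_sq_of_hasDerivAt_eq_nonneg_mul {u u' q : ℝ → ℝ} {a : ℝ}
    (hq : ∀ x, 0 ≤ q x)
    (hu : ∀ x, HasDerivAt u (u' x) x) (hu' : ∀ x, HasDerivAt u' (q x * u x) x) (ha : u' a = 0)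
    (x : ℝ) : u a ^ 2 ≤ u x ^ 2 := by
  have hmono : Monotone fun x => u x * u' x :=
    monotone_of_hasDerivAt_nonneg (fun y => (hu y).mul (hu' y)) fun y => show (0 : ℝ) ≤ _ by
      nlinarith [mul_nonneg (hq y) (mul_self_nonneg (u y)), mul_self_nonneg (u' y)]
  obtain ⟨hle, hge⟩ := sign_of_monotone_of_eq_zero (a := a) hmono (by simp [ha])
  refine apply_le_apply_of_hasDerivAt_of_sign (f' := fun x => 2 * (u x * u' x))
    (fun y => ((hu y).pow 2).congr_deriv (by ring)) (fun y hy => by linarith [hle y hy])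
    (fun y hy => by linarith [hge y hy]) x

theorem pos_of_hasDerivAt_eq_nonneg_mul {u u' q : ℝ → ℝ} {a : ℝ} (hq : ∀ x, 0 ≤ q x)
    (hu : ∀ x, HasDerivAt u (u' x) x) (hu' : ∀ x, HasDerivAt u' (q x * u x) x) (ha : u' a = 0)
    (hua : 0 < u a) (x : ℝ) : 0 < u x := by
  by_contra! hx
  have hcont : Continuous u := continuous_iff_continuousAt.2 fun x => (hu x).continuousAt
  obtain ⟨y, -, hy⟩ :=
    intermediate_value_uIcc hcont.continuousOn
      (mem_uIcc.2 (Or.inr ⟨hx, hua.le⟩))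
  have := sq_le_sq_of_hasDerivAt_eq_nonneg_mul hq hu hu' ha y
  rw [hy] at this
  nlinarith

theorem div_le_div_of_sturm_comparison {u u' v v' p q : ℝ → ℝ} {a : ℝ} (hpq : ∀ x, p x ≤ q x)
    (hu₀ : ∀ x, 0 ≤ u x) (hv₀ : ∀ x, 0 < v x)
    (hu : ∀ x, HasDerivAt u (u' x) x) (hu' : ∀ x, HasDerivAt u' (p x * u x) x)
    (hv : ∀ x, HasDerivAt v (v' x) x) (hv' : ∀ x, HasDerivAt v' (q x * v x) x)
    (hua : u' a = 0) (hva : v' a = 0) (x : ℝ) : u x / v x ≤ u a / v a := by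
  set N : ℝ → ℝ := fun x => u x * v' x - u' x * v x
  have hN : Monotone N :=
    monotone_of_hasDerivAt_nonneg (f' := fun x => (q x - p x) * (u x * v x))
      (fun x => (((hu x).mul (hv' x)).sub ((hu' x).mul (hv x))).congr_deriv (by ring))
      fun x => show (0 : ℝ) ≤ _ from
        mul_nonneg (sub_nonneg.2 (hpq x)) (mul_nonneg (hu₀ x) (hv₀ x).le)
  obtain ⟨hle, hge⟩ := sign_of_monotone_of_eq_zero (a := a) hN (by simp [N, hua, hva])
  have := apply_le_apply_of_hasDerivAt_of_sign (f := fun x => -(u x / v x))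
    (f' := fun x => N x / v x ^ 2)
    (fun x => ((hu x).div (hv x) (hv₀ x).ne').neg.congr_deriv (by ring))
    (fun x hx => div_nonpos_of_nonpos_of_nonneg (hle x hx) (sq_nonneg _))
    (fun x hx => div_nonneg (hge x hx) (sq_nonneg _)) x
  exact neg_le_neg_iff.1 this

theorem hasDerivAt_cosh_mul_s9 (k x : ℝ) :
    HasDerivAt (fun x => Real.cosh (k * x)) (k * Real.sinh (k * x)) x :=
  (((hasDerivAt_id x).const_mul k).cosh).congr_deriv (by simp [mul_comm])

theorem hasDerivAt_mul_sinh_mul (k x : ℝ) :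
    HasDerivAt (fun x => k * Real.sinh (k * x)) (k ^ 2 * Real.cosh (k * x)) x :=
  ((((hasDerivAt_id x).const_mul k).sinh).const_mul k).congr_deriv (by simp; ring)

theorem fermi_coefficient_comparison_general (k₁ k₂ : ℝ)
    (K h h' : ℝ → ℝ)
    (hKlb : ∀ s, -k₂ ^ 2 ≤ K s) (hKub : ∀ s, K s ≤ -k₁ ^ 2)
    (hder : ∀ s, HasDerivAt h (h' s) s)
    (hder2 : ∀ s, HasDerivAt h' (-K s * h s) s)
    (h0 : h 0 = 1) (h'0 : h' 0 = 0) :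
    ∀ s : ℝ, Real.cosh (k₁ * s) ≤ h s ∧ h s ≤ Real.cosh (k₂ * s) := by
  have hpos : ∀ s, 0 < h s :=
    pos_of_hasDerivAt_eq_nonneg_mul (fun s => by linarith [hKub s, sq_nonneg k₁]) hder hder2 h'0
      (h0 ▸ one_pos)
  intro s
  have hlower := div_le_div_of_sturm_comparison (p := fun _ => k₁ ^ 2) (q := fun x => -K x)
    (fun x => by linarith [hKub x]) (fun x => (Real.cosh_pos _).le) hpos
    (hasDerivAt_cosh_mul_s9 k₁) (hasDerivAt_mul_sinh_mul k₁) hder hder2 (by simp) h'0 s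
  have hupper := div_le_div_of_sturm_comparison (p := fun x => -K x) (q := fun _ => k₂ ^ 2)
    (fun x => by linarith [hKlb x]) (fun x => (hpos x).le) (fun x => Real.cosh_pos _)
    hder hder2 (hasDerivAt_cosh_mul_s9 k₂) (hasDerivAt_mul_sinh_mul k₂) h'0 (by simp) s
  simp only [mul_zero, Real.cosh_zero, h0, div_one] at hlower hupper
  exact ⟨(div_le_one (hpos s)).1 hlower, (div_le_one (Real.cosh_pos _)).1 hupper⟩

/-- If `0 < k₁ ≤ k₂`, `K : ℝ → ℝ` is continuous with
`-k₂² ≤ K ≤ -k₁²`, and `h` is twice differentiable with `h'' = -K·h`, `h 0 = 1`,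
`h' 0 = 0`, then `cosh (k₁ s) ≤ h s ≤ cosh (k₂ s)` for all `s`. -/
theorem fermi_coefficient_comparison (k₁ k₂ : ℝ) (hk₁ : 0 < k₁) (hk : k₁ ≤ k₂)
    (K h h' : ℝ → ℝ) (hKcont : Continuous K)
    (hKlb : ∀ s, -k₂ ^ 2 ≤ K s) (hKub : ∀ s, K s ≤ -k₁ ^ 2)
    (hder : ∀ s, HasDerivAt h (h' s) s)
    (hder2 : ∀ s, HasDerivAt h' (-K s * h s) s)
    (h0 : h 0 = 1) (h'0 : h' 0 = 0) :
    ∀ s : ℝ, Real.cosh (k₁ * s) ≤ h s ∧ h s ≤ Real.cosh (k₂ * s) :=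
  fermi_coefficient_comparison_general k₁ k₂ K h h' hKlb hKub hder hder2 h0 h'0
end

section
/- Let 0 < k₁ ≤ k₂, let K : ℝ → ℝ be continuous with −k₂² ≤ K(s) ≤ −k₁² for all s, and let h : ℝ → ℝ be twice differentiable with h''(s) = −K(s)·h(s), h(0) = 1 and h'(0) = 0. Then h'(s) < 0 for all s < 0 and h'(s) > 0 for all s > 0. -/
/-!
Since `K < 0`, the equation `h'' = -K h` gives `h''` the sign of `h`. On `[0, ∞)` the quantity
`h h'` has derivative `h'² - K h² ≥ 0` and vanishes at `0`, so `h²` never decreases there; hence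
`h` cannot reach zero and stays positive. Then `h'' > 0`, so `h'` increases strictly from
`h'(0) = 0`. The case `s < 0` follows by applying this to `t ↦ h (-t)`.
-/

open Set

theorem monotoneOn_Ici_of_hasDerivAt_nonneg {g g' : ℝ → ℝ} {a : ℝ}
    (hg : ∀ s, HasDerivAt g (g' s) s) (hg' : ∀ s, a < s → 0 ≤ g' s) : MonotoneOn g (Ici a) :=
  monotoneOn_of_hasDerivWithinAt_nonneg (convex_Ici a)
    (fun s _ => (hg s).continuousAt.continuousWithinAt) (fun s _ => (hg s).hasDerivWithinAt)
    (fun s hs => hg' s (by rwa [interior_Ici] at hs))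

theorem strictMonoOn_Ici_of_hasDerivAt_pos {g g' : ℝ → ℝ} {a : ℝ}
    (hg : ∀ s, HasDerivAt g (g' s) s) (hg' : ∀ s, a < s → 0 < g' s) : StrictMonoOn g (Ici a) :=
  strictMonoOn_of_hasDerivWithinAt_pos (convex_Ici a)
    (fun s _ => (hg s).continuousAt.continuousWithinAt) (fun s _ => (hg s).hasDerivWithinAt)
    (fun s hs => hg' s (by rwa [interior_Ici] at hs))

section SecondOrder

variable {f f' q : ℝ → ℝ}

theorem monotoneOn_sq_of_hasDerivAt_eq_mul (hf : ∀ s, HasDerivAt f (f' s) s)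
    (hf' : ∀ s, HasDerivAt f' (q s * f s) s) (hq : ∀ s, 0 ≤ s → 0 ≤ q s)
    (h0 : 0 ≤ f 0 * f' 0) : MonotoneOn (fun s => f s ^ 2) (Ici 0) := by
  have hprod : MonotoneOn (fun s => f s * f' s) (Ici 0) :=
    monotoneOn_Ici_of_hasDerivAt_nonneg (fun s => (hf s).mul (hf' s))
      (fun s hs => by nlinarith [sq_nonneg (f' s), mul_nonneg (hq s hs.le) (sq_nonneg (f s))])
  refine monotoneOn_Ici_of_hasDerivAt_nonneg (fun s => (hf s).pow 2) (fun s hs => ?_)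
  have : f 0 * f' 0 ≤ f s * f' s := hprod self_mem_Ici (mem_Ici.2 hs.le) hs.le
  simp only [Nat.cast_ofNat, Nat.reduceSub, pow_one]
  nlinarith

theorem pos_of_hasDerivAt_eq_mul (hf : ∀ s, HasDerivAt f (f' s) s)
    (hf' : ∀ s, HasDerivAt f' (q s * f s) s) (hq : ∀ s, 0 ≤ s → 0 ≤ q s) (hf0 : 0 < f 0)
    (hf'0 : 0 ≤ f' 0) {s : ℝ} (hs : 0 ≤ s) : 0 < f s := by
  have hsq := monotoneOn_sq_of_hasDerivAt_eq_mul hf hf' hq (mul_nonneg hf0.le hf'0)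
  by_contra! hfs
  obtain ⟨c, ⟨hc0, -⟩, hfc⟩ : 0 ∈ f '' Icc 0 s :=
    intermediate_value_Icc' hs (fun t _ => (hf t).continuousAt.continuousWithinAt) ⟨hfs, hf0.le⟩
  have : f 0 ^ 2 ≤ f c ^ 2 := hsq self_mem_Ici hc0 hc0
  rw [hfc] at this
  nlinarith

theorem deriv_pos_of_hasDerivAt_eq_mul (hf : ∀ s, HasDerivAt f (f' s) s)
    (hf' : ∀ s, HasDerivAt f' (q s * f s) s) (hq : ∀ s, 0 ≤ s → 0 < q s) (hf0 : 0 < f 0)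
    (hf'0 : 0 ≤ f' 0) {s : ℝ} (hs : 0 < s) : 0 < f' s := by
  have hf_pos t (ht : 0 ≤ t) : 0 < f t :=
    pos_of_hasDerivAt_eq_mul hf hf' (fun t ht => (hq t ht).le) hf0 hf'0 ht
  have hf'_mono : StrictMonoOn f' (Ici 0) :=
    strictMonoOn_Ici_of_hasDerivAt_pos hf' fun t ht => mul_pos (hq t ht.le) (hf_pos t ht.le)
  exact hf'0.trans_lt (hf'_mono self_mem_Ici (mem_Ici.2 hs.le) hs)

end SecondOrder

theorem fermi_coefficient_monotone_general (k₁ : ℝ) (hk₁ : 0 < k₁)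
    (K h h' : ℝ → ℝ)
    (hKub : ∀ s, K s ≤ -k₁ ^ 2)
    (hder : ∀ s, HasDerivAt h (h' s) s)
    (hder2 : ∀ s, HasDerivAt h' (-K s * h s) s)
    (h0 : h 0 = 1) (h'0 : h' 0 = 0) :
    (∀ s : ℝ, s < 0 → h' s < 0) ∧ (∀ s : ℝ, 0 < s → 0 < h' s) := by
  have hK_neg s : 0 < -K s := by nlinarith [hKub s]
  have hh0 : 0 < h 0 := h0 ▸ one_pos
  refine ⟨fun s hs => ?_, fun s hs =>
    deriv_pos_of_hasDerivAt_eq_mul hder hder2 (fun t _ => hK_neg t) hh0 h'0.ge hs⟩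
  have hrefl t : HasDerivAt (fun t => h (-t)) (-h' (-t)) t := by
    simpa [Function.comp_def] using (hder (-t)).comp t (hasDerivAt_neg t)
  have hrefl' t : HasDerivAt (fun t => -h' (-t)) (-K (-t) * h (-t)) t := by
    simpa [Function.comp_def] using (hder2 (-t)).neg.comp t (hasDerivAt_neg t)
  simpa using deriv_pos_of_hasDerivAt_eq_mul hrefl hrefl' (fun t _ => hK_neg (-t))
    (by simpa using hh0) (by simp [h'0]) (neg_pos.2 hs)

/-- If `0 < k₁ ≤ k₂`, `K : ℝ → ℝ` is continuous with
`-k₂² ≤ K ≤ -k₁²`, and `h` is twice differentiable with `h'' = -K·h`, `h 0 = 1`,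
`h' 0 = 0`, then `h' < 0` on `(-∞,0)` and `h' > 0` on `(0,∞)`. -/
theorem fermi_coefficient_monotone (k₁ k₂ : ℝ) (hk₁ : 0 < k₁) (hk : k₁ ≤ k₂)
    (K h h' : ℝ → ℝ) (hKcont : Continuous K)
    (hKlb : ∀ s, -k₂ ^ 2 ≤ K s) (hKub : ∀ s, K s ≤ -k₁ ^ 2)
    (hder : ∀ s, HasDerivAt h (h' s) s)
    (hder2 : ∀ s, HasDerivAt h' (-K s * h s) s)
    (h0 : h 0 = 1) (h'0 : h' 0 = 0) :
    (∀ s : ℝ, s < 0 → h' s < 0) ∧ (∀ s : ℝ, 0 < s → 0 < h' s) :=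
  fermi_coefficient_monotone_general k₁ hk₁ K h h' hKub hder hder2 h0 h'0
end

section
/- For all real numbers x₁ < x₂, arctan(exp(x₂)) − arctan(exp(x₁)) ≤ arctan( (sinh(x₂) − sinh(x₁)) / 2 ). Equivalently, for all real p < q, arctan(q) − arctan(p) ≤ 2·arctan((q − p)/2). -/
/-!
With `m = (p + q) / 2` and `t = (q - p) / 2`, the difference `arctan (m + t) - arctan (m - t)` is
even in `m` and, since `(m - t)² ≤ (m + t)²` for `m, t ≥ 0`, decreasing in `m ≥ 0`; so it is largest
at `m = 0`, where it equals `2 arctan t`. The inequality for `exp` is this one for `p = sinh x₁`,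
`q = sinh x₂`, through the Gudermannian identity `arctan (sinh x) = 2 arctan (exp x) - π / 2`, which
is the addition formula for `arctan (exp x) - arctan (exp (-x))`.
-/

open Real Set

theorem arctan_sinh (x : ℝ) : arctan (sinh x) = 2 * arctan (exp x) - π / 2 := by
  have hexp := exp_pos x
  have hsum := arctan_add (x := exp x) (y := -(exp x)⁻¹) (by
    rw [mul_neg, mul_inv_cancel₀ hexp.ne']; norm_num)
  rw [arctan_neg, arctan_inv_of_pos hexp] at hsum
  rw [sinh_eq, exp_neg]
  convert hsum.symm using 2
  · field_simp
    ring
  · ring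

theorem antitoneOn_arctan_add_sub_arctan_sub {t : ℝ} (ht : 0 ≤ t) :
    AntitoneOn (fun m ↦ arctan (m + t) - arctan (m - t)) (Ici 0) := by
  refine antitoneOn_of_hasDerivWithinAt_nonpos (convex_Ici 0) (by fun_prop)
    (fun m _ ↦ ((((hasDerivAt_id m).add_const t).arctan).sub
      ((hasDerivAt_id m).sub_const t).arctan).hasDerivWithinAt) fun m hm ↦ ?_
  rw [interior_Ici, mem_Ioi] at hm
  have hsq : (m - t) ^ 2 ≤ (m + t) ^ 2 := by nlinarith
  simp only [id, mul_one, sub_nonpos]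
  gcongr

theorem arctan_add_sub_arctan_sub_le (m : ℝ) {t : ℝ} (ht : 0 ≤ t) :
    arctan (m + t) - arctan (m - t) ≤ 2 * arctan t := by
  wlog hm : 0 ≤ m generalizing m
  · have h := this (-m) (by linarith)
    rw [show -m + t = -(m - t) by ring, show -m - t = -(m + t) by ring, arctan_neg,
      arctan_neg] at h
    linarith
  simpa [two_mul, arctan_neg] using
    antitoneOn_arctan_add_sub_arctan_sub ht self_mem_Ici hm hm

theorem arctan_sub_arctan_le {p q : ℝ} (hpq : p ≤ q) :
    arctan q - arctan p ≤ 2 * arctan ((q - p) / 2) := by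
  have h := arctan_add_sub_arctan_sub_le ((p + q) / 2) (t := (q - p) / 2) (by linarith)
  rwa [show (p + q) / 2 + (q - p) / 2 = q by ring, show (p + q) / 2 - (q - p) / 2 = p by ring]
    at h

/-- For all real `x₁ < x₂`,
`arctan (exp x₂) - arctan (exp x₁) ≤ arctan ((sinh x₂ - sinh x₁) / 2)`;
equivalently, for all real `p < q`, `arctan q - arctan p ≤ 2 * arctan ((q - p) / 2)`. -/
theorem arctan_exp_sub_le_arctan_sinh_sub :
    (∀ x₁ x₂ : ℝ, x₁ < x₂ →
      Real.arctan (Real.exp x₂) - Real.arctan (Real.exp x₁) ≤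
        Real.arctan ((Real.sinh x₂ - Real.sinh x₁) / 2)) ∧
    (∀ p q : ℝ, p < q →
      Real.arctan q - Real.arctan p ≤ 2 * Real.arctan ((q - p) / 2)) := by
  refine ⟨fun x₁ x₂ h ↦ ?_, fun p q h ↦ arctan_sub_arctan_le h.le⟩
  have hsinh := arctan_sub_arctan_le (sinh_lt_sinh.2 h).le
  rw [arctan_sinh, arctan_sinh] at hsinh
  linarith
end

section
/- Let k > 0 and a₁ < a₂ be real numbers, and let W = (1/k)·arcsinh( (sinh(k a₂) − sinh(k a₁)) / 2 ), so that ∫_{−W}^{W} cosh(ks) ds = ∫_{a₁}^{a₂} cosh(ks) ds. Then ∫_{a₁}^{a₂} ds / cosh(ks) ≤ ∫_{−W}^{W} ds / cosh(ks). -/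
/-! The substitution `t = sinh (k s)` turns `cosh (k s) ds` into `dt / k` and `ds / cosh (k s)` into
`dt / (k (1 + t²))`. The two intervals therefore correspond to `t`-intervals of the same length,
`[sinh (k a₁), sinh (k a₂)]` and its translate centred at `0`, and the claim becomes
`arctan v - arctan u ≤ arctan d - arctan (-d)` with `d = (v - u) / 2`: the density
`1 / (1 + t²)` decreases in `|t|`, so among intervals of a given length the centred one carries the
most mass. -/

open Real intervalIntegral

section SymmetricIncrement

variable {f f' : ℝ → ℝ}

theorem antitoneOn_sub_shift_of_hasDerivAt (hf : ∀ x, HasDerivAt f (f' x) x)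
    (hf' : ∀ x y, |x| ≤ |y| → f' y ≤ f' x) {d : ℝ} (hd : 0 ≤ d) :
    AntitoneOn (fun m => f (m + d) - f (m - d)) (Set.Ici 0) := by
  have hF : ∀ m, HasDerivAt (fun m => f (m + d) - f (m - d)) (f' (m + d) - f' (m - d)) m :=
    fun m => ((hf _).comp_add_const m d).sub ((hf _).comp_sub_const m d)
  have hF_cont : Continuous fun m => f (m + d) - f (m - d) :=
    continuous_iff_continuousAt.2 fun m => (hF m).continuousAt
  refine antitoneOn_of_hasDerivWithinAt_nonpos (convex_Ici 0) hF_cont.continuousOn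
    (fun m _ => (hF m).hasDerivWithinAt) fun m hm => ?_
  rw [interior_Ici, Set.mem_Ioi] at hm
  have : |m - d| ≤ |m + d| := by
    rw [abs_of_pos (by linarith : 0 < m + d)]
    exact abs_le.2 ⟨by linarith, by linarith⟩
  linarith [hf' _ _ this]

theorem sub_le_sub_centered_of_hasDerivAt (hf : ∀ x, HasDerivAt f (f' x) x)
    (hf' : ∀ x y, |x| ≤ |y| → f' y ≤ f' x) {u v : ℝ} (huv : u ≤ v) :
    f v - f u ≤ f ((v - u) / 2) - f (-((v - u) / 2)) := by
  set d := (v - u) / 2 with hd_def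
  have hd : 0 ≤ d := by linarith
  have hv : (u + v) / 2 + d = v := by linarith
  have hu : (u + v) / 2 - d = u := by linarith
  rcases le_total 0 ((u + v) / 2) with hm | hm
  · have := antitoneOn_sub_shift_of_hasDerivAt hf hf' hd Set.self_mem_Ici hm hm
    simpa only [zero_add, zero_sub, hu, hv] using this
  · -- `x ↦ -f (-x)` satisfies the same hypotheses and reflects `[u, v]` to `[-v, -u]`.
    have hg : ∀ x, HasDerivAt (fun x => -f (-x)) (f' (-x)) x := fun x =>
      ((hf (-x)).comp x (hasDerivAt_neg' x)).neg.congr_deriv (by ring)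
    have hg' : ∀ x y, |x| ≤ |y| → f' (-y) ≤ f' (-x) := fun x y h =>
      hf' _ _ (by rwa [abs_neg, abs_neg])
    have := antitoneOn_sub_shift_of_hasDerivAt hg hg' hd Set.self_mem_Ici
      (Set.mem_Ici.2 (neg_nonneg.2 hm)) (neg_nonneg.2 hm)
    have hu' : -((u + v) / 2) + d = -u := by linarith
    have hv' : -((u + v) / 2) - d = -v := by linarith
    simp only [zero_add, zero_sub, neg_neg, hu', hv'] at this
    linarith

end SymmetricIncrement

theorem arctan_sub_arctan_le_s14 {u v : ℝ} (huv : u ≤ v) :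
    arctan v - arctan u ≤ arctan ((v - u) / 2) - arctan (-((v - u) / 2)) := by
  refine sub_le_sub_centered_of_hasDerivAt hasDerivAt_arctan (fun x y hxy => ?_) huv
  have : x ^ 2 ≤ y ^ 2 := sq_le_sq.2 hxy
  gcongr

theorem integral_cosh (a b : ℝ) : ∫ x in a..b, cosh x = sinh b - sinh a :=
  integral_eq_sub_of_hasDerivAt (fun x _ => hasDerivAt_sinh x)
    (continuous_cosh.intervalIntegrable a b)

theorem hasDerivAt_arctan_sinh (x : ℝ) :
    HasDerivAt (fun x => arctan (sinh x)) (1 / cosh x) x := by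
  convert (hasDerivAt_sinh x).arctan using 1
  rw [← cosh_sq']
  field_simp

theorem integral_one_div_cosh (a b : ℝ) :
    ∫ x in a..b, 1 / cosh x = arctan (sinh b) - arctan (sinh a) :=
  integral_eq_sub_of_hasDerivAt (fun x _ => hasDerivAt_arctan_sinh x)
    ((continuous_const.div continuous_cosh fun x => (cosh_pos x).ne').intervalIntegrable a b)

/-- For `k > 0`, `a₁ < a₂` and
`W = (1/k) · arsinh ((sinh (k a₂) - sinh (k a₁)) / 2)` (so that
`∫_{-W}^{W} cosh (k s) ds = ∫_{a₁}^{a₂} cosh (k s) ds`), one has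
`∫_{a₁}^{a₂} ds / cosh (k s) ≤ ∫_{-W}^{W} ds / cosh (k s)`. -/
theorem integral_one_div_cosh_le_symmetrized (k a₁ a₂ : ℝ) (hk : 0 < k) (ha : a₁ < a₂)
    (W : ℝ) (hW : W = (1 / k) * Real.arsinh ((Real.sinh (k * a₂) - Real.sinh (k * a₁)) / 2)) :
    (∫ s in (-W)..W, Real.cosh (k * s)) = (∫ s in a₁..a₂, Real.cosh (k * s)) ∧
    (∫ s in a₁..a₂, 1 / Real.cosh (k * s)) ≤ ∫ s in (-W)..W, 1 / Real.cosh (k * s) := by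
  have hsinhW : sinh (k * W) = (sinh (k * a₂) - sinh (k * a₁)) / 2 := by
    rw [hW, ← mul_assoc, mul_one_div_cancel hk.ne', one_mul, sinh_arsinh]
  have huv : sinh (k * a₁) ≤ sinh (k * a₂) := sinh_le_sinh.2 (by gcongr)
  simp only [integral_comp_mul_left (fun s => cosh s) hk.ne',
    integral_comp_mul_left (fun s => 1 / cosh s) hk.ne', integral_cosh, integral_one_div_cosh,
    smul_eq_mul, mul_neg, sinh_neg, hsinhW]
  constructor
  · ring
  · exact mul_le_mul_of_nonneg_left (arctan_sub_arctan_le_s14 huv) (inv_nonneg.2 hk.le)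
end

section
/- Let k > 0 and 0 ≤ b ≤ a < π/(2k), and let −a ≤ a₁ < a₂ ≤ b. Define W = (1/k)·arcsin( sin(k a₂) − sin(k a₁) − sin(k a) ), so that ∫_{−a}^{W} cos(ks) ds = ∫_{a₁}^{a₂} cos(ks) ds. Then ∫_{a₁}^{a₂} ds / cos(ks) ≤ ∫_{−a}^{W} ds / cos(ks). -/
/-!
The substitution `u = sin (k s)` turns `cos (k s) ds` into `du / k` and `ds / cos (k s)` into
`du / (k (1 - u²))`, whose primitive is `artanh u / k`. With `A = sin (k a)`, the
section `(a₁, a₂)` becomes an interval `[y, x] ⊆ [-A, A]`, the anchored one becomes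
`[-A, x - y - A]`, and the claim is that `artanh` increases most over the latter. As
`(1 + u) / (1 - u) = exp (2 artanh u)`, this reduces to the polynomial inequality
`(x - y) (A - x) (A + y) ≥ 0`.
-/

open Real Set Filter Topology

theorem Real.hasDerivAt_artanh {x : ℝ} (hx : x ∈ Ioo (-1) 1) :
    HasDerivAt artanh (1 / (1 - x ^ 2)) x := by
  have hp : 0 < 1 + x := by linarith [hx.1]
  have hm : 0 < 1 - x := by linarith [hx.2]
  have hq : HasDerivAt (fun y => (1 + y) / (1 - y))
      ((1 * (1 - x) - (1 + x) * -1) / (1 - x) ^ 2) x :=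
    ((hasDerivAt_id x).const_add 1).div ((hasDerivAt_id x).const_sub 1) hm.ne'
  have heq : (fun y => 1 / 2 * log ((1 + y) / (1 - y))) =ᶠ[𝓝 x] artanh :=
    eventually_of_mem (Ioo_mem_nhds hx.1 hx.2) fun y hy =>
      (artanh_eq_half_log (Ioo_subset_Icc_self hy)).symm
  refine (((hq.log (div_pos hp hm).ne').const_mul (1 / 2)).congr_of_eventuallyEq
    heq.symm).congr_deriv ?_
  rw [show 1 - x ^ 2 = (1 + x) * (1 - x) by ring]
  field_simp
  ring

theorem integral_one_div_cos_eq_artanh {x y : ℝ} (hx : x ∈ Ioo (-(π / 2)) (π / 2))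
    (hy : y ∈ Ioo (-(π / 2)) (π / 2)) :
    ∫ t in x..y, 1 / cos t = artanh (sin y) - artanh (sin x) := by
  have hcos : ∀ t ∈ uIcc x y, 0 < cos t := fun t ht =>
    cos_pos_of_mem_Ioo (ordConnected_Ioo.uIcc_subset hx hy ht)
  have hint : IntervalIntegrable (fun t => 1 / cos t) MeasureTheory.volume x y :=
    ContinuousOn.intervalIntegrable <|
      continuousOn_const.div continuous_cos.continuousOn fun t ht => (hcos t ht).ne'
  refine intervalIntegral.integral_eq_sub_of_hasDerivAt (f := fun t => artanh (sin t))
    (fun t ht => ?_) hint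
  have hsin : sin t ∈ Ioo (-1) 1 := by
    have := sin_sq_add_cos_sq t
    have := hcos t ht
    constructor <;> nlinarith
  refine ((hasDerivAt_artanh hsin).comp t (hasDerivAt_sin t)).congr_deriv ?_
  have := (hcos t ht).ne'
  rw [← cos_sq']
  field_simp

theorem artanh_sub_artanh_le_anchored {A x y : ℝ} (hA : A < 1) (hy : -A ≤ y) (hyx : y < x)
    (hx : x ≤ A) : artanh x - artanh y ≤ artanh (x - y - A) - artanh (-A) := by
  set B := x - y - A
  have hpos : ∀ z : ℝ, -A ≤ z → z ≤ A → 0 < 1 + z ∧ 0 < 1 - z := fun z h₁ h₂ =>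
    ⟨by linarith, by linarith⟩
  obtain ⟨hxp, hxm⟩ := hpos x (by linarith) hx
  obtain ⟨hyp, hym⟩ := hpos y hy (by linarith)
  obtain ⟨hBp, hBm⟩ := hpos B (by linarith) (by linarith)
  obtain ⟨hAp, hAm⟩ := hpos (-A) le_rfl (by linarith)
  have hmem : ∀ z : ℝ, 0 < 1 + z → 0 < 1 - z → z ∈ Icc (-1) 1 := fun z h₁ h₂ =>
    ⟨by linarith, by linarith⟩
  rw [artanh_eq_half_log (hmem x hxp hxm), artanh_eq_half_log (hmem y hyp hym),
    artanh_eq_half_log (hmem B hBp hBm), artanh_eq_half_log (hmem (-A) hAp hAm)]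
  have hprod : (1 + x) / (1 - x) * ((1 + -A) / (1 - -A)) ≤
      (1 + B) / (1 - B) * ((1 + y) / (1 - y)) := by
    rw [div_mul_div_comm, div_mul_div_comm, div_le_div_iff₀ (by positivity) (by positivity)]
    have hdiff : (1 + B) * (1 + y) * ((1 - x) * (1 - -A)) - (1 + x) * (1 + -A) * ((1 - B) * (1 - y)) =
        2 * (x - y) * (A - x) * (A + y) := by ring
    nlinarith [hdiff, mul_nonneg (mul_nonneg (sub_pos.2 hyx).le (sub_nonneg.2 hx))
      (neg_le_iff_add_nonneg.1 hy)]
  have hlog := log_le_log (by positivity) hprod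
  rw [log_mul (by positivity) (by positivity), log_mul (by positivity) (by positivity)] at hlog
  linarith

theorem integral_one_div_cos_le_anchored_unit {α α₁ α₂ : ℝ} (hα : α < π / 2)
    (hα₁ : -α ≤ α₁) (h₁₂ : α₁ < α₂) (hα₂ : α₂ ≤ α) :
    (∫ t in (-α)..arcsin (sin α₂ - sin α₁ - sin α), cos t) = (∫ t in α₁..α₂, cos t) ∧
      (∫ t in α₁..α₂, 1 / cos t) ≤
        ∫ t in (-α)..arcsin (sin α₂ - sin α₁ - sin α), 1 / cos t := by
  have hmem : ∀ t, -α ≤ t → t ≤ α → t ∈ Ioo (-(π / 2)) (π / 2) := fun t h₁ h₂ =>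
    ⟨by linarith, by linarith⟩
  have hsinα : sin α < 1 := by
    simpa using sin_lt_sin_of_lt_of_le_pi_div_two (by linarith) le_rfl hα
  have hsin₁ : -sin α ≤ sin α₁ := by
    simpa using sin_le_sin_of_le_of_le_pi_div_two (by linarith) (by linarith) hα₁
  have hsin₁₂ : sin α₁ < sin α₂ :=
    sin_lt_sin_of_lt_of_le_pi_div_two (by linarith) (by linarith) h₁₂
  have hsin₂ : sin α₂ ≤ sin α :=
    sin_le_sin_of_le_of_le_pi_div_two (by linarith) (by linarith) hα₂
  set v := sin α₂ - sin α₁ - sin α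
  have hv : v ∈ Ioo (-1) 1 := ⟨by linarith, by linarith⟩
  have hω : arcsin v ∈ Ioo (-(π / 2)) (π / 2) :=
    ⟨neg_pi_div_two_lt_arcsin.2 hv.1, arcsin_lt_pi_div_two.2 hv.2⟩
  rw [integral_cos, integral_cos,
    integral_one_div_cos_eq_artanh (hmem _ hα₁ (by linarith)) (hmem _ (by linarith) hα₂),
    integral_one_div_cos_eq_artanh (hmem _ le_rfl (by linarith)) hω, sin_arcsin hv.1.le hv.2.le,
    sin_neg]
  exact ⟨by ring, artanh_sub_artanh_le_anchored hsinα hsin₁ hsin₁₂ hsin₂⟩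

theorem integral_one_div_cos_le_anchored_general (k a b a₁ a₂ : ℝ) (hk : 0 < k)
    (hba : b ≤ a) (ha : a < π / (2 * k))
    (ha₁ : -a ≤ a₁) (h₁₂ : a₁ < a₂) (ha₂ : a₂ ≤ b)
    (W : ℝ) (hW : W = (1 / k) * Real.arcsin (Real.sin (k * a₂) - Real.sin (k * a₁) - Real.sin (k * a))) :
    (∫ s in (-a)..W, Real.cos (k * s)) = (∫ s in a₁..a₂, Real.cos (k * s)) ∧
    (∫ s in a₁..a₂, 1 / Real.cos (k * s)) ≤ ∫ s in (-a)..W, 1 / Real.cos (k * s) := by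
  have hkW : k * W = arcsin (sin (k * a₂) - sin (k * a₁) - sin (k * a)) := by
    rw [hW, ← mul_assoc, mul_one_div_cancel hk.ne', one_mul]
  have hka : k * a < π / 2 := by
    rw [lt_div_iff₀ (by positivity)] at ha
    linarith
  obtain ⟨hcos, hinv⟩ := integral_one_div_cos_le_anchored_unit hka
    (by simpa using mul_le_mul_of_nonneg_left ha₁ hk.le)
    (mul_lt_mul_of_pos_left h₁₂ hk) (mul_le_mul_of_nonneg_left (ha₂.trans hba) hk.le)
  simp only [intervalIntegral.integral_comp_mul_left (fun t => cos t) hk.ne',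
    intervalIntegral.integral_comp_mul_left (fun t => 1 / cos t) hk.ne', mul_neg, hkW, smul_eq_mul]
  exact ⟨congrArg _ hcos, mul_le_mul_of_nonneg_left hinv (inv_nonneg.2 hk.le)⟩

/-- For `k > 0`, `0 ≤ b ≤ a < π/(2k)` and `-a ≤ a₁ < a₂ ≤ b`, with
`W = (1/k) · arcsin (sin (k a₂) - sin (k a₁) - sin (k a))` (so that
`∫_{-a}^{W} cos (k s) ds = ∫_{a₁}^{a₂} cos (k s) ds`), one has
`∫_{a₁}^{a₂} ds / cos (k s) ≤ ∫_{-a}^{W} ds / cos (k s)`. -/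
theorem integral_one_div_cos_le_anchored (k a b a₁ a₂ : ℝ) (hk : 0 < k)
    (hb : 0 ≤ b) (hba : b ≤ a) (ha : a < π / (2 * k))
    (ha₁ : -a ≤ a₁) (h₁₂ : a₁ < a₂) (ha₂ : a₂ ≤ b)
    (W : ℝ) (hW : W = (1 / k) * Real.arcsin (Real.sin (k * a₂) - Real.sin (k * a₁) - Real.sin (k * a))) :
    (∫ s in (-a)..W, Real.cos (k * s)) = (∫ s in a₁..a₂, Real.cos (k * s)) ∧
    (∫ s in a₁..a₂, 1 / Real.cos (k * s)) ≤ ∫ s in (-a)..W, 1 / Real.cos (k * s) :=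
  integral_one_div_cos_le_anchored_general k a b a₁ a₂ hk hba ha ha₁ h₁₂ ha₂ W hW
end

section
/- Let k > 0 and let E ⊆ ℝ be a measurable set with ∫_E cosh(ks) ds < ∞. Then ∫_E ds / cosh(ks) ≤ (2/k)·arctan( (k/2)·∫_E cosh(ks) ds ). Equality holds when E is an interval symmetric about 0. -/
/-!
Bathtub principle. Relative to the weight `cosh (k s)`, the integrand `1 / cosh (k s)` has
density `cosh (k s)⁻²`, which decreases in `|s|`; so among sets of prescribed weighted length
the symmetric interval `(-W, W)` maximizes `∫ 1 / cosh (k s)`. On that interval both integrals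
are explicit, `(2/k) sinh (k W)` and `(2/k) arctan (sinh (k W))`, the latter because
`arctan ∘ sinh` is an antiderivative of `1 / cosh`.
-/

open MeasureTheory Set

section Bathtub

variable {α : Type*} [MeasurableSpace α] {μ : Measure α} {E I : Set α} {w v : α → ℝ}

theorem setIntegral_le_setIntegral_of_exchange (c : ℝ) (hE : MeasurableSet E)
    (hI : MeasurableSet I) (hwE : IntegrableOn w E μ) (hwI : IntegrableOn w I μ)
    (hvE : IntegrableOn v E μ) (hvI : IntegrableOn v I μ)
    (hmass : ∫ x in E, w x ∂μ = ∫ x in I, w x ∂μ)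
    (hout : ∀ x ∈ E \ I, v x ≤ c * w x) (hin : ∀ x ∈ I \ E, c * w x ≤ v x) :
    ∫ x in E, v x ∂μ ≤ ∫ x in I, v x ∂μ := by
  have hsplitE := integral_inter_add_sdiff hI hvE
  have hsplitI := integral_inter_add_sdiff hE hvI
  have hsplitwE := integral_inter_add_sdiff hI hwE
  have hsplitwI := integral_inter_add_sdiff hE hwI
  rw [inter_comm I E] at hsplitI hsplitwI
  have hmass' : ∫ x in E \ I, w x ∂μ = ∫ x in I \ E, w x ∂μ := by linarith
  have hEI : ∫ x in E \ I, v x ∂μ ≤ ∫ x in I \ E, v x ∂μ :=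
    calc ∫ x in E \ I, v x ∂μ
        ≤ ∫ x in E \ I, c * w x ∂μ :=
          setIntegral_mono_on (hvE.mono_set sdiff_subset) ((hwE.mono_set sdiff_subset).const_mul c)
            (hE.diff hI) hout
      _ = ∫ x in I \ E, c * w x ∂μ := by rw [integral_const_mul, integral_const_mul, hmass']
      _ ≤ ∫ x in I \ E, v x ∂μ :=
          setIntegral_mono_on ((hwI.mono_set sdiff_subset).const_mul c) (hvI.mono_set sdiff_subset)
            (hI.diff hE) hin
  linarith

end Bathtub

namespace Real

theorem continuous_cosh_mul (k : ℝ) : Continuous fun s => cosh (k * s) :=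
  continuous_cosh.comp (continuous_const_mul k)

theorem integral_cosh_mul_Ioo {k : ℝ} (hk : k ≠ 0) {W : ℝ} (hW : 0 ≤ W) :
    ∫ s in Ioo (-W) W, cosh (k * s) = 2 / k * sinh (k * W) := by
  have hderiv (x : ℝ) : HasDerivAt (fun s => sinh (k * s) / k) (cosh (k * x)) x := by
    refine (((hasDerivAt_const_mul k).sinh).div_const k).congr_deriv ?_
    field_simp
  rw [← integral_Ioc_eq_integral_Ioo, ← intervalIntegral.integral_of_le (by linarith),
    intervalIntegral.integral_eq_sub_of_hasDerivAt (fun x _ => hderiv x)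
      ((continuous_cosh_mul k).intervalIntegrable _ _),
    mul_neg, sinh_neg]
  ring

theorem continuous_one_div_cosh_mul (k : ℝ) : Continuous fun s => 1 / cosh (k * s) :=
  continuous_const.div (continuous_cosh_mul k) fun _ => (cosh_pos _).ne'

theorem integral_one_div_cosh_mul_Ioo {k : ℝ} (hk : k ≠ 0) {W : ℝ} (hW : 0 ≤ W) :
    ∫ s in Ioo (-W) W, 1 / cosh (k * s) = 2 / k * arctan (sinh (k * W)) := by
  have hderiv (x : ℝ) :
      HasDerivAt (fun s => arctan (sinh (k * s)) / k) (1 / cosh (k * x)) x := by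
    refine (((hasDerivAt_const_mul k).sinh).arctan.div_const k).congr_deriv ?_
    have hc : cosh (k * x) ≠ 0 := (cosh_pos _).ne'
    rw [← cosh_sq']
    field_simp
  rw [← integral_Ioc_eq_integral_Ioo, ← intervalIntegral.integral_of_le (by linarith),
    intervalIntegral.integral_eq_sub_of_hasDerivAt (fun x _ => hderiv x)
      ((continuous_one_div_cosh_mul k).intervalIntegrable _ _),
    mul_neg, sinh_neg, arctan_neg]
  ring

theorem integral_one_div_cosh_mul_Ioo_eq_arctan {k : ℝ} (hk : k ≠ 0) {W : ℝ} (hW : 0 ≤ W) :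
    ∫ s in Ioo (-W) W, 1 / cosh (k * s) =
      2 / k * arctan (k / 2 * ∫ s in Ioo (-W) W, cosh (k * s)) := by
  rw [integral_cosh_mul_Ioo hk hW, integral_one_div_cosh_mul_Ioo hk hW]
  field_simp

theorem one_div_le_inv_sq_mul {x y : ℝ} (hy : 0 < y) (hyx : y ≤ x) : 1 / x ≤ (y ^ 2)⁻¹ * x :=
  calc 1 / x = (x ^ 2)⁻¹ * x := by field_simp [(hy.trans_le hyx).ne']
    _ ≤ (y ^ 2)⁻¹ * x := by gcongr; linarith

theorem inv_sq_mul_le_one_div {x y : ℝ} (hx : 0 < x) (hxy : x ≤ y) : (y ^ 2)⁻¹ * x ≤ 1 / x :=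
  calc (y ^ 2)⁻¹ * x ≤ (x ^ 2)⁻¹ * x := by gcongr
    _ = 1 / x := by field_simp

theorem integrableOn_one_div_cosh_mul {k : ℝ} {E : Set ℝ}
    (hE : IntegrableOn (fun s => cosh (k * s)) E) :
    IntegrableOn (fun s => 1 / cosh (k * s)) E :=
  Integrable.mono hE (continuous_one_div_cosh_mul k).aestronglyMeasurable <| ae_of_all _ fun s => by
    have hc := one_le_cosh (k * s)
    rw [norm_of_nonneg (by positivity), norm_of_nonneg (by positivity)]
    exact ((div_le_one (by positivity)).2 hc).trans hc

theorem setIntegral_one_div_cosh_mul_le_Ioo {k W : ℝ} (hW : 0 ≤ W) {E : Set ℝ}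
    (hE : MeasurableSet E) (hfin : IntegrableOn (fun s => cosh (k * s)) E)
    (hmass : ∫ s in E, cosh (k * s) = ∫ s in Ioo (-W) W, cosh (k * s)) :
    ∫ s in E, 1 / cosh (k * s) ≤ ∫ s in Ioo (-W) W, 1 / cosh (k * s) := by
  have hI : IntegrableOn (fun s => cosh (k * s)) (Ioo (-W) W) :=
    (continuous_cosh_mul k).integrableOn_Icc.mono_set Ioo_subset_Icc_self
  refine setIntegral_le_setIntegral_of_exchange (cosh (k * W) ^ 2)⁻¹ hE measurableSet_Ioo hfin hI
    (integrableOn_one_div_cosh_mul hfin) (integrableOn_one_div_cosh_mul hI) hmass ?_ ?_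
  · rintro s ⟨-, hs⟩
    have hWs : W ≤ |s| := not_lt.1 fun h => hs (abs_lt.1 h)
    refine one_div_le_inv_sq_mul (cosh_pos _) (cosh_le_cosh.2 ?_)
    rw [abs_mul, abs_mul, abs_of_nonneg hW]
    gcongr
  · rintro s ⟨hs, -⟩
    refine inv_sq_mul_le_one_div (cosh_pos _) (cosh_le_cosh.2 ?_)
    rw [abs_mul, abs_mul, abs_of_nonneg hW]
    gcongr
    exact (abs_lt.2 hs).le

end Real

/-- For `k > 0` and a measurable set `E ⊆ ℝ` with
`∫_E cosh (k s) ds < ∞`, one has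
`∫_E ds / cosh (k s) ≤ (2/k) · arctan ((k/2) · ∫_E cosh (k s) ds)`,
with equality when `E` is an interval symmetric about `0`. -/
theorem integral_one_div_cosh_le_of_measurable (k : ℝ) (hk : 0 < k)
    (E : Set ℝ) (hE : MeasurableSet E)
    (hfin : IntegrableOn (fun s => Real.cosh (k * s)) E) :
    (∫ s in E, 1 / Real.cosh (k * s)) ≤
        (2 / k) * Real.arctan ((k / 2) * ∫ s in E, Real.cosh (k * s)) ∧
    ∀ W : ℝ, 0 ≤ W →
      (∫ s in Ioo (-W) W, 1 / Real.cosh (k * s)) =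
        (2 / k) * Real.arctan ((k / 2) * ∫ s in Ioo (-W) W, Real.cosh (k * s)) := by
  refine ⟨?_, fun W hW => Real.integral_one_div_cosh_mul_Ioo_eq_arctan hk.ne' hW⟩
  set L := ∫ s in E, Real.cosh (k * s)
  set W := Real.arsinh (k * L / 2) / k
  have hL : 0 ≤ L := integral_nonneg fun s => (Real.cosh_pos (k * s)).le
  have hW : 0 ≤ W := div_nonneg (Real.arsinh_nonneg_iff.2 (by positivity)) hk.le
  have hmass : L = ∫ s in Ioo (-W) W, Real.cosh (k * s) := by
    rw [Real.integral_cosh_mul_Ioo hk.ne' hW, mul_div_cancel₀ _ hk.ne', Real.sinh_arsinh]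
    field_simp
  calc ∫ s in E, 1 / Real.cosh (k * s)
      ≤ ∫ s in Ioo (-W) W, 1 / Real.cosh (k * s) :=
        Real.setIntegral_one_div_cosh_mul_le_Ioo hW hE hfin hmass
    _ = 2 / k * Real.arctan (k / 2 * L) := by
        rw [Real.integral_one_div_cosh_mul_Ioo_eq_arctan hk.ne' hW, hmass]
end
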